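/- arXiv:1302.5609 — 11 statements merged into one kernel-verified Lean document; each statement's English description precedes it below -/
import Mathlib

section
/- For topological spaces X₁ and X₂, the map f : V(X₁ ⊕ X₂) → V(X₁) × V(X₂) sending a closed subset C of the topological sum X₁ ⊕ X₂ to the pair (C ∩ X₁, C ∩ X₂) is a homeomorphism (where V(X₁) × V(X₂) carries the product topology), with inverse sending (A₁, A₂) to the disjoint union A₁ ⊕ A₂ ⊆ X₁ ⊕ X₂. -/
open TopologicalSpace

universe u

/-- The lower Vietoris topology on the set `V X` of closed subsets of a topological space `X`:
it is generated by the sets `U^◇ = {A closed | A ∩ U ≠ ∅}` for `U ⊆ X` open. -/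
instance lowerVietoris (X : Type u) [TopologicalSpace X] : TopologicalSpace (Closeds X) :=
  TopologicalSpace.generateFrom
    {s | ∃ U : Set X, IsOpen U ∧ s = {A : Closeds X | ((A : Set X) ∩ U).Nonempty}}

section Aux

variable {X₁ X₂ : Type u} [TopologicalSpace X₁] [TopologicalSpace X₂]

private lemma lv_preimage_inl (A : Set X₁) (B : Set X₂) :
    Sum.inl ⁻¹' (Sum.inl '' A ∪ Sum.inr '' B) = A := by
  rw [Set.preimage_union, Set.preimage_image_eq _ Sum.inl_injective]
  ext x; simp

private lemma lv_preimage_inr (A : Set X₁) (B : Set X₂) :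
    Sum.inr ⁻¹' (Sum.inl '' A ∪ Sum.inr '' B) = B := by
  rw [Set.preimage_union, Set.preimage_image_eq _ Sum.inr_injective]
  ext x; simp

private lemma lv_union_eq (C : Set (X₁ ⊕ X₂)) :
    Sum.inl '' (Sum.inl ⁻¹' C) ∪ Sum.inr '' (Sum.inr ⁻¹' C) = C := by
  rw [Set.image_preimage_eq_inter_range, Set.image_preimage_eq_inter_range,
    ← Set.inter_union_distrib_left, Set.range_inl_union_range_inr, Set.inter_univ]

private lemma lv_isClosed_union (A : Set X₁) (B : Set X₂) (hA : IsClosed A) (hB : IsClosed B) :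
    IsClosed (Sum.inl '' A ∪ Sum.inr '' B) := by
  rw [isClosed_sum_iff, lv_preimage_inl, lv_preimage_inr]
  exact ⟨hA, hB⟩

/-- The underlying equivalence. -/
private def lvEquiv : Closeds (X₁ ⊕ X₂) ≃ Closeds X₁ × Closeds X₂ where
  toFun C := (⟨Sum.inl ⁻¹' (C : Set (X₁ ⊕ X₂)), C.isClosed.preimage continuous_inl⟩,
              ⟨Sum.inr ⁻¹' (C : Set (X₁ ⊕ X₂)), C.isClosed.preimage continuous_inr⟩)
  invFun p := ⟨Sum.inl '' (p.1 : Set X₁) ∪ Sum.inr '' (p.2 : Set X₂),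
    lv_isClosed_union _ _ p.1.isClosed p.2.isClosed⟩
  left_inv C := by
    apply Closeds.ext
    exact lv_union_eq _
  right_inv p := by
    ext1
    · apply Closeds.ext; exact lv_preimage_inl _ _
    · apply Closeds.ext; exact lv_preimage_inr _ _

private lemma lv_mem_gen {X : Type u} [TopologicalSpace X] {U : Set X} (hU : IsOpen U) :
    IsOpen {A : Closeds X | ((A : Set X) ∩ U).Nonempty} :=
  TopologicalSpace.isOpen_generateFrom_of_mem ⟨U, hU, rfl⟩

private lemma lv_continuous_toFun :
    Continuous (lvEquiv (X₁ := X₁) (X₂ := X₂)) := by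
  apply Continuous.prodMk
  · rw [continuous_generateFrom_iff]
    rintro s ⟨U, hU, rfl⟩
    have : (fun C : Closeds (X₁ ⊕ X₂) =>
        (⟨Sum.inl ⁻¹' (C : Set (X₁ ⊕ X₂)), C.isClosed.preimage continuous_inl⟩ : Closeds X₁)) ⁻¹'
        {A : Closeds X₁ | ((A : Set X₁) ∩ U).Nonempty}
        = {C : Closeds (X₁ ⊕ X₂) | ((C : Set (X₁ ⊕ X₂)) ∩ Sum.inl '' U).Nonempty} := by
      ext C
      simp only [Set.mem_preimage, Set.mem_setOf_eq]
      constructor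
      · rintro ⟨x, hxC, hxU⟩
        exact ⟨Sum.inl x, hxC, x, hxU, rfl⟩
      · rintro ⟨y, hyC, x, hxU, rfl⟩
        exact ⟨x, hyC, hxU⟩
    exact this ▸ lv_mem_gen (isOpenMap_inl U hU)
  · rw [continuous_generateFrom_iff]
    rintro s ⟨U, hU, rfl⟩
    have : (fun C : Closeds (X₁ ⊕ X₂) =>
        (⟨Sum.inr ⁻¹' (C : Set (X₁ ⊕ X₂)), C.isClosed.preimage continuous_inr⟩ : Closeds X₂)) ⁻¹'
        {A : Closeds X₂ | ((A : Set X₂) ∩ U).Nonempty}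
        = {C : Closeds (X₁ ⊕ X₂) | ((C : Set (X₁ ⊕ X₂)) ∩ Sum.inr '' U).Nonempty} := by
      ext C
      simp only [Set.mem_preimage, Set.mem_setOf_eq]
      constructor
      · rintro ⟨x, hxC, hxU⟩
        exact ⟨Sum.inr x, hxC, x, hxU, rfl⟩
      · rintro ⟨y, hyC, x, hxU, rfl⟩
        exact ⟨x, hyC, hxU⟩
    exact this ▸ lv_mem_gen (isOpenMap_inr U hU)

private lemma lv_continuous_invFun :
    Continuous (lvEquiv (X₁ := X₁) (X₂ := X₂)).symm := by
  rw [continuous_generateFrom_iff]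
  rintro s ⟨W, hW, rfl⟩
  have : (lvEquiv (X₁ := X₁) (X₂ := X₂)).symm ⁻¹'
      {A : Closeds (X₁ ⊕ X₂) | ((A : Set (X₁ ⊕ X₂)) ∩ W).Nonempty}
      = (Prod.fst ⁻¹' {A : Closeds X₁ | ((A : Set X₁) ∩ Sum.inl ⁻¹' W).Nonempty}) ∪
        (Prod.snd ⁻¹' {A : Closeds X₂ | ((A : Set X₂) ∩ Sum.inr ⁻¹' W).Nonempty}) := by
    ext ⟨A₁, A₂⟩
    simp only [Set.mem_preimage, Set.mem_setOf_eq, Set.mem_union, lvEquiv, Equiv.coe_fn_symm_mk]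
    constructor
    · rintro ⟨x, hxC, hxW⟩
      rcases hxC with ⟨a, ha, rfl⟩ | ⟨a, ha, rfl⟩
      · exact Or.inl ⟨a, ha, hxW⟩
      · exact Or.inr ⟨a, ha, hxW⟩
    · rintro (⟨a, ha, hw⟩ | ⟨a, ha, hw⟩)
      · exact ⟨Sum.inl a, Or.inl ⟨a, ha, rfl⟩, hw⟩
      · exact ⟨Sum.inr a, Or.inr ⟨a, ha, rfl⟩, hw⟩
  rw [this]
  exact ((lv_mem_gen (hW.preimage continuous_inl)).preimage continuous_fst).union
    ((lv_mem_gen (hW.preimage continuous_inr)).preimage continuous_snd)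

end Aux

/-- For topological spaces `X₁` and `X₂`, the map `V(X₁ ⊕ X₂) → V(X₁) × V(X₂)` sending a
closed subset `C` of the topological sum to `(C ∩ X₁, C ∩ X₂)` is a homeomorphism (for the
lower Vietoris topologies, the product carrying the product topology), with inverse sending
`(A₁, A₂)` to the disjoint union `A₁ ⊕ A₂ ⊆ X₁ ⊕ X₂`. -/
theorem lowerVietoris_sum_homeomorph_prod (X₁ X₂ : Type u)
    [TopologicalSpace X₁] [TopologicalSpace X₂] :
    ∃ h : Closeds (X₁ ⊕ X₂) ≃ₜ Closeds X₁ × Closeds X₂,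
      (∀ C : Closeds (X₁ ⊕ X₂),
        h C = (⟨Sum.inl ⁻¹' (C : Set (X₁ ⊕ X₂)), C.isClosed.preimage continuous_inl⟩,
               ⟨Sum.inr ⁻¹' (C : Set (X₁ ⊕ X₂)), C.isClosed.preimage continuous_inr⟩)) ∧
      ∀ (A₁ : Closeds X₁) (A₂ : Closeds X₂),
        ∃ hcl : IsClosed (Sum.inl '' (A₁ : Set X₁) ∪ Sum.inr '' (A₂ : Set X₂)),
          h.symm (A₁, A₂) = ⟨Sum.inl '' (A₁ : Set X₁) ∪ Sum.inr '' (A₂ : Set X₂), hcl⟩ := by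
  refine ⟨⟨lvEquiv, lv_continuous_toFun, lv_continuous_invFun⟩, fun C => rfl, fun A₁ A₂ =>
    ⟨lv_isClosed_union _ _ A₁.isClosed A₂.isClosed, rfl⟩⟩
end

section
/- For topological spaces X₁ and X₂, the map Π : V(X₁) × V(X₂) → V(X₁ × X₂) sending (A₁, A₂) to A₁ × A₂ is continuous (where V(X₁) × V(X₂) carries the product topology and X₁ × X₂ the product topology), and Π is left adjoint to the map can : V(X₁ × X₂) → V(X₁) × V(X₂), W ↦ (closure(π₁[W]), closure(π₂[W])), with respect to the reverse-inclusion orders; explicitly, for all closed A₁ ⊆ X₁, A₂ ⊆ X₂ one has closure(π₁[A₁ × A₂]) ⊆ A₁ and closure(π₂[A₁ × A₂]) ⊆ A₂, and for every closed W ⊆ X₁ × X₂ one has W ⊆ closure(π₁[W]) × closure(π₂[W]). -/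
open TopologicalSpace

universe u

/-- For topological spaces `X₁` and `X₂`, the map `Π : V(X₁) × V(X₂) → V(X₁ × X₂)`,
`(A₁, A₂) ↦ A₁ × A₂`, is continuous (for the lower Vietoris topologies) and is left adjoint to
`can : V(X₁ × X₂) → V(X₁) × V(X₂)`, `W ↦ (closure (π₁[W]), closure (π₂[W]))`, with respect to
the reverse-inclusion orders; explicitly, `closure (π₁[A₁ × A₂]) ⊆ A₁` and
`closure (π₂[A₁ × A₂]) ⊆ A₂` for all closed `A₁ ⊆ X₁`, `A₂ ⊆ X₂`, and
`W ⊆ closure (π₁[W]) × closure (π₂[W])` for every closed `W ⊆ X₁ × X₂`. -/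
theorem lowerVietoris_prod_continuous_and_adjoint (X₁ X₂ : Type u)
    [TopologicalSpace X₁] [TopologicalSpace X₂] :
    Continuous (fun p : Closeds X₁ × Closeds X₂ =>
      (⟨(p.1 : Set X₁) ×ˢ (p.2 : Set X₂), p.1.isClosed.prod p.2.isClosed⟩ :
        Closeds (X₁ × X₂))) ∧
    (∀ (A₁ : Closeds X₁) (A₂ : Closeds X₂),
      closure (Prod.fst '' ((A₁ : Set X₁) ×ˢ (A₂ : Set X₂))) ⊆ (A₁ : Set X₁) ∧
      closure (Prod.snd '' ((A₁ : Set X₁) ×ˢ (A₂ : Set X₂))) ⊆ (A₂ : Set X₂)) ∧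
    ∀ W : Closeds (X₁ × X₂),
      (W : Set (X₁ × X₂)) ⊆
        closure (Prod.fst '' (W : Set (X₁ × X₂))) ×ˢ
          closure (Prod.snd '' (W : Set (X₁ × X₂))) := by
  refine ⟨?_, ?_, ?_⟩
  · rw [continuous_generateFrom_iff]
    rintro s ⟨U, hU, rfl⟩
    have : (fun p : Closeds X₁ × Closeds X₂ =>
        (⟨(p.1 : Set X₁) ×ˢ (p.2 : Set X₂), p.1.isClosed.prod p.2.isClosed⟩ :
          Closeds (X₁ × X₂))) ⁻¹' {A : Closeds (X₁ × X₂) | ((A : Set (X₁ × X₂)) ∩ U).Nonempty}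
        = ⋃ (V : Set X₁ × Set X₂) (_ : IsOpen V.1 ∧ IsOpen V.2 ∧ V.1 ×ˢ V.2 ⊆ U),
            {A : Closeds X₁ | ((A : Set X₁) ∩ V.1).Nonempty} ×ˢ
              {A : Closeds X₂ | ((A : Set X₂) ∩ V.2).Nonempty} := by
      ext p
      constructor
      · rintro ⟨z, hzA, hzU⟩
        obtain ⟨U₁, U₂, hU₁, hU₂, hz₁, hz₂, hsub⟩ := isOpen_prod_iff.mp hU z.1 z.2 hzU
        simp only [Set.mem_iUnion, Set.mem_prod, Set.mem_setOf_eq]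
        exact ⟨(U₁, U₂), ⟨hU₁, hU₂, hsub⟩, ⟨z.1, hzA.1, hz₁⟩, ⟨z.2, hzA.2, hz₂⟩⟩
      · intro hp
        obtain ⟨V, hV⟩ := Set.mem_iUnion.mp hp
        obtain ⟨⟨hV₁, hV₂, hsub⟩, ⟨x, hx, hx'⟩, ⟨y, hy, hy'⟩⟩ := Set.mem_iUnion.mp hV
        exact ⟨(x, y), ⟨hx, hy⟩, hsub ⟨hx', hy'⟩⟩
    rw [this]
    refine isOpen_iUnion fun V => isOpen_iUnion fun hV => ?_
    have h1 : IsOpen {A : Closeds X₁ | ((A : Set X₁) ∩ V.1).Nonempty} :=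
      isOpen_generateFrom_of_mem ⟨V.1, hV.1, rfl⟩
    have h2 : IsOpen {A : Closeds X₂ | ((A : Set X₂) ∩ V.2).Nonempty} :=
      isOpen_generateFrom_of_mem ⟨V.2, hV.2.1, rfl⟩
    exact h1.prod h2
  · intro A₁ A₂
    constructor
    · refine closure_minimal ?_ A₁.isClosed
      rintro x ⟨z, hz, rfl⟩; exact hz.1
    · refine closure_minimal ?_ A₂.isClosed
      rintro x ⟨z, hz, rfl⟩; exact hz.2
  · intro W w hw
    exact ⟨subset_closure ⟨w, hw, rfl⟩, subset_closure ⟨w, hw, rfl⟩⟩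
end

section
/- For every topological space X, the space VX of closed subsets of X with the lower Vietoris topology is sober; that is, VX is T0 and every irreducible closed subset of VX has a generic point. -/
open TopologicalSpace

universe u

open Set in
/-- Open sets of the lower Vietoris topology are upward closed. -/
lemma lowerVietoris_upward {X : Type u} [TopologicalSpace X] {W : Set (Closeds X)}
    (hW : IsOpen W) : ∀ ⦃A B : Closeds X⦄, (B : Set X) ⊆ A → B ∈ W → A ∈ W := by
  have hW' : TopologicalSpace.GenerateOpen
      {s | ∃ U : Set X, IsOpen U ∧ s = {A : Closeds X | ((A : Set X) ∩ U).Nonempty}} W := hW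
  clear hW
  induction hW' with
  | basic s hs =>
    obtain ⟨U, _, rfl⟩ := hs
    rintro A B hBA ⟨x, hxB, hxU⟩
    exact ⟨x, hBA hxB, hxU⟩
  | univ => intro A B _ _; trivial
  | inter s t h1 h2 ihs iht => exact fun A B h hB => ⟨ihs h hB.1, iht h hB.2⟩
  | sUnion S hS ih =>
    rintro A B h ⟨s, hsS, hBs⟩
    exact ⟨s, hsS, ih s hsS h hBs⟩

open Set in
lemma lowerVietoris_mem_closure_singleton {X : Type u} [TopologicalSpace X]
    {A B : Closeds X} : B ∈ closure ({A} : Set (Closeds X)) ↔ (B : Set X) ⊆ A := by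
  constructor
  · intro h
    by_contra hBA
    obtain ⟨x, hxB, hxA⟩ := not_subset.1 hBA
    have hopen : IsOpen {C : Closeds X | ((C : Set X) ∩ (↑A)ᶜ).Nonempty} :=
      TopologicalSpace.isOpen_generateFrom_of_mem ⟨(↑A)ᶜ, A.isClosed.isOpen_compl, rfl⟩
    rw [mem_closure_iff] at h
    obtain ⟨C, hC1, hC2⟩ := h _ hopen ⟨x, hxB, hxA⟩
    rw [mem_singleton_iff] at hC2
    subst hC2
    obtain ⟨y, hy1, hy2⟩ := hC1
    exact hy2 hy1
  · intro hBA
    rw [mem_closure_iff]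
    intro W hW hBW
    exact ⟨A, lowerVietoris_upward hW hBA hBW, rfl⟩

open Set in
/-- For every topological space `X`, the space `V X` of closed subsets of `X` with the lower
Vietoris topology is sober: it is T0 and every irreducible closed subset has a generic
point. -/
theorem lowerVietoris_sober (X : Type u) [TopologicalSpace X] :
    T0Space (Closeds X) ∧ QuasiSober (Closeds X) := by
  constructor
  · rw [t0Space_iff_inseparable]
    intro A B h
    have h1 : (A : Set X) ⊆ B :=
      lowerVietoris_mem_closure_singleton.1 (h.specializes'.mem_closure)
    have h2 : (B : Set X) ⊆ A :=
      lowerVietoris_mem_closure_singleton.1 (h.specializes.mem_closure)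
    exact SetLike.coe_injective (h1.antisymm h2)
  · constructor
    intro S hirr hcl
    classical
    set A₀ : Closeds X := sSup S with hA₀
    refine ⟨A₀, ?_⟩
    have hle : ∀ B ∈ S, (B : Set X) ⊆ A₀ := fun B hB => SetLike.coe_subset_coe.2 (le_sSup hB)
    -- A₀ meets an open U iff some member of S does
    have hmeet : ∀ U : Set X, IsOpen U → ((A₀ : Set X) ∩ U).Nonempty →
        ∃ B ∈ S, ((B : Set X) ∩ U).Nonempty := by
      intro U hU ⟨x, hx, hxU⟩
      rw [hA₀, Closeds.coe_sSup] at hx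
      obtain ⟨y, hyU, hy⟩ := mem_closure_iff.1 hx U hU hxU
      obtain ⟨_, ⟨B, hBS, rfl⟩, hyB⟩ := hy
      exact ⟨B, hBS, y, hyB, hyU⟩
    -- A₀ ∈ S
    have hbasis := TopologicalSpace.isTopologicalBasis_of_subbasis
      (rfl :
        (lowerVietoris X) = TopologicalSpace.generateFrom
          {s | ∃ U : Set X, IsOpen U ∧ s = {A : Closeds X | ((A : Set X) ∩ U).Nonempty}})
    have hA₀S : A₀ ∈ S := by
      rw [← hcl.closure_eq]
      rw [hbasis.mem_closure_iff]
      rintro o ⟨f, ⟨hf, hfs⟩, rfl⟩ hA₀o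
      -- every element of f meets S
      have hmeetS : ∀ u ∈ hf.toFinset, (S ∩ u).Nonempty := by
        intro u hu
        rw [hf.mem_toFinset] at hu
        obtain ⟨U, hUopen, rfl⟩ := hfs hu
        obtain ⟨B, hBS, hB⟩ := hmeet U hUopen (hA₀o _ hu)
        exact ⟨B, hBS, hB⟩
      have hopenS : ∀ u ∈ hf.toFinset, IsOpen u := by
        intro u hu
        rw [hf.mem_toFinset] at hu
        obtain ⟨U, hUopen, rfl⟩ := hfs hu
        exact TopologicalSpace.isOpen_generateFrom_of_mem ⟨U, hUopen, rfl⟩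
      obtain ⟨C, hCS, hC⟩ := isIrreducible_iff_sInter.1 hirr hf.toFinset hopenS hmeetS
      refine ⟨C, ?_, hCS⟩
      intro u hu
      exact hC u (by rwa [Finset.mem_coe, hf.mem_toFinset])
    -- conclude
    apply subset_antisymm
    · rw [← hcl.closure_eq]
      exact closure_mono (singleton_subset_iff.2 hA₀S)
    · intro B hBS
      exact lowerVietoris_mem_closure_singleton.2 (hle B hBS)
end

section
/- Let X₁, X₂ and Z be spectral spaces, and let r be a spectral relation from Z to X₁ and s a spectral relation from Z to X₂. Then the relation t from Z to the topological sum X₁ ⊕ X₂ defined by t(z, inl x) ⟺ r(z, x) and t(z, inr y) ⟺ s(z, y) is a spectral relation; moreover, t is the unique spectral relation from Z to X₁ ⊕ X₂ such that for all z ∈ Z, x ∈ X₁, y ∈ X₂: (∃ w ∈ X₁ ⊕ X₂, t(z, w) and inl x ∈ closure{w}) ⟺ r(z, x) and (∃ w, t(z, w) and inr y ∈ closure{w}) ⟺ s(z, y). Consequently, the topological sum X₁ ⊕ X₂ is the product of X₁ and X₂ in the category of spectral spaces and spectral relations. -/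
open TopologicalSpace Set Topology

universe u

/-- A topological space is spectral if it is compact, T0, quasi-sober, quasi-separated and its
compact open sets form a basis of the topology. -/
class SpectralSpace' (X : Type u) [TopologicalSpace X] : Prop where
  toCompactSpace : CompactSpace X
  toT0Space : T0Space X
  toQuasiSober : QuasiSober X
  toQuasiSeparatedSpace : QuasiSeparatedSpace X
  isTopologicalBasis : IsTopologicalBasis {U : Set X | IsCompact U ∧ IsOpen U}


namespace SPAux

variable {Y : Type u} [TopologicalSpace Y]

def dia (U : Set Y) : Set (Closeds Y) := {A | ((A : Set Y) ∩ U).Nonempty}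

lemma lv_eq : (lowerVietoris Y) = generateFrom {s | ∃ U : Set Y, IsOpen U ∧ s = dia U} := rfl

lemma isOpen_dia {U : Set Y} (hU : IsOpen U) : IsOpen (dia U) :=
  TopologicalSpace.GenerateOpen.basic _ ⟨U, hU, rfl⟩

lemma mem_of_isOpen_of_le {W : Set (Closeds Y)} (hW : IsOpen W) {A B : Closeds Y}
    (hAB : (A : Set Y) ⊆ (B : Set Y)) : A ∈ W → B ∈ W := by
  have hW' : TopologicalSpace.GenerateOpen
      {s | ∃ U : Set Y, IsOpen U ∧ s = dia U} W := hW
  clear hW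
  induction hW' with
  | basic s hs =>
    obtain ⟨U, hU, rfl⟩ := hs
    rintro ⟨y, hyA, hyU⟩
    exact ⟨y, hAB hyA, hyU⟩
  | univ => exact fun _ => trivial
  | inter s t _ _ ihs iht => exact fun h => ⟨ihs h.1, iht h.2⟩
  | sUnion S _ ih => rintro ⟨sset, hs, hA⟩; exact ⟨sset, hs, ih _ hs hA⟩

lemma continuous_eta : Continuous (fun y : Y => (⟨closure {y}, isClosed_closure⟩ : Closeds Y)) := by
  apply continuous_generateFrom_iff.mpr
  rintro _ ⟨U, hU, rfl⟩
  have : (fun y : Y => (⟨closure {y}, isClosed_closure⟩ : Closeds Y)) ⁻¹'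
      {A : Closeds Y | ((A : Set Y) ∩ U).Nonempty} = U := by
    ext y
    constructor
    · rintro ⟨z, hz, hzU⟩
      obtain ⟨w, hwU, rfl⟩ := mem_closure_iff.mp hz U hU hzU
      exact hwU
    · intro hy; exact ⟨y, subset_closure rfl, hy⟩
  rw [this]; exact hU

lemma isCompact_dia {K : Set Y} (hK : IsCompact K) : IsCompact (dia K) := by
  apply isCompact_of_finite_subcover
  intro ι W hWo hcov
  have hKsub : K ⊆ ⋃ i, (fun y : Y => (⟨closure {y}, isClosed_closure⟩ : Closeds Y)) ⁻¹' (W i) := by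
    intro k hk
    have hmem : (⟨closure {k}, isClosed_closure⟩ : Closeds Y) ∈ dia K :=
      ⟨k, subset_closure rfl, hk⟩
    obtain ⟨i, hi⟩ := mem_iUnion.mp (hcov hmem)
    exact mem_iUnion.mpr ⟨i, hi⟩
  obtain ⟨t, ht⟩ := hK.elim_finite_subcover _ (fun i => (hWo i).preimage continuous_eta) hKsub
  refine ⟨t, ?_⟩
  rintro A ⟨k, hkA, hkK⟩
  obtain ⟨i, hit, hki⟩ := mem_iUnion₂.mp (ht hkK)
  exact mem_iUnion₂.mpr ⟨i, hit,
    mem_of_isOpen_of_le (hWo i) (A.isClosed.closure_subset_iff.mpr (singleton_subset_iff.mpr hkA)) hki⟩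


lemma lv_eq_co (hB : IsTopologicalBasis {U : Set Y | IsCompact U ∧ IsOpen U}) :
    (lowerVietoris Y) =
      generateFrom {s | ∃ K : Set Y, (IsCompact K ∧ IsOpen K) ∧ s = dia K} := by
  refine le_antisymm (le_generateFrom ?_) (le_generateFrom ?_)
  · rintro _ ⟨K, ⟨hKc, hKo⟩, rfl⟩
    exact isOpen_dia hKo
  · rintro _ ⟨U, hU, rfl⟩
    show TopologicalSpace.GenerateOpen _ (dia U)
    have hdec : dia U = ⋃₀ {s | ∃ K : Set Y, ((IsCompact K ∧ IsOpen K) ∧ K ⊆ U) ∧ s = dia K} := by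
      ext A
      constructor
      · rintro ⟨y, hyA, hyU⟩
        obtain ⟨K, ⟨hKc, hKo⟩, hyK, hKU⟩ := hB.exists_subset_of_mem_open hyU hU
        exact ⟨dia K, ⟨K, ⟨⟨hKc, hKo⟩, hKU⟩, rfl⟩, ⟨y, hyA, hyK⟩⟩
      · rintro ⟨_, ⟨K, ⟨_, hKU⟩, rfl⟩, y, hyA, hyK⟩
        exact ⟨y, hyA, hKU hyK⟩
    rw [hdec]
    exact .sUnion _ (by rintro _ ⟨K, hK, rfl⟩; exact .basic _ ⟨K, hK.1, rfl⟩)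

lemma isCompact_isOpen_sInter {Z' : Type u} [TopologicalSpace Z'] [SpectralSpace' Z']
    {F : Set (Set Z')} (hF : F.Finite) (h : ∀ s ∈ F, IsCompact s ∧ IsOpen s) :
    IsCompact (⋂₀ F) ∧ IsOpen (⋂₀ F) := by
  haveI := SpectralSpace'.toCompactSpace (X := Z')
  haveI := SpectralSpace'.toQuasiSeparatedSpace (X := Z')
  refine Set.Finite.induction_on
    (motive := fun F _ => (∀ s ∈ F, IsCompact s ∧ IsOpen s) → IsCompact (⋂₀ F) ∧ IsOpen (⋂₀ F))
    F hF ?_ ?_ h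
  · intro _
    simp only [sInter_empty]
    exact ⟨isCompact_univ, isOpen_univ⟩
  · intro a F' _ _ ih h'
    have hrest := ih (fun u hu => h' u (mem_insert_of_mem a hu))
    have ha' := h' a (mem_insert a F')
    rw [sInter_insert]
    exact ⟨QuasiSeparatedSpace.inter_isCompact a (⋂₀ F') ha'.2 ha'.1 hrest.2 hrest.1,
      ha'.2.inter hrest.2⟩

lemma isCompact_preimage_vietoris {Z' : Type u} [TopologicalSpace Z'] [SpectralSpace' Z']
    (hB : IsTopologicalBasis {U : Set Y | IsCompact U ∧ IsOpen U})
    {f : Z' → Closeds Y} (hf : Continuous f)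
    (hdia : ∀ K : Set Y, IsCompact K → IsOpen K → IsCompact (f ⁻¹' dia K))
    {W : Set (Closeds Y)} (hWo : IsOpen W) (hWc : IsCompact W) : IsCompact (f ⁻¹' W) := by
  have hbasis := isTopologicalBasis_of_subbasis (lv_eq_co hB)
  -- each basis element has compact open preimage
  have hpre : ∀ b ∈ ((fun g : Set (Set (Closeds Y)) => ⋂₀ g) ''
      {g : Set (Set (Closeds Y)) | g.Finite ∧ g ⊆
        {s | ∃ K : Set Y, (IsCompact K ∧ IsOpen K) ∧ s = dia K}}), IsCompact (f ⁻¹' b) := by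
    rintro _ ⟨G, ⟨hGfin, hGsub⟩, rfl⟩
    rw [preimage_sInter]
    have : (⋂ t ∈ G, f ⁻¹' t) = ⋂₀ ((fun t => f ⁻¹' t) '' G) := by
      rw [sInter_image]
    rw [this]
    refine (isCompact_isOpen_sInter ((hGfin.image _)) ?_).1
    rintro _ ⟨t, htG, rfl⟩
    obtain ⟨K, ⟨hKc, hKo⟩, rfl⟩ := hGsub htG
    exact ⟨hdia K hKc hKo, (isOpen_dia hKo).preimage hf⟩
  obtain ⟨S, hSsub, rfl⟩ := hbasis.open_eq_sUnion hWo
  have hcov : ⋃₀ S ⊆ ⋃ s : S, (s : Set (Closeds Y)) := by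
    rintro A ⟨sset, hs, hA⟩
    exact mem_iUnion.mpr ⟨⟨sset, hs⟩, hA⟩
  obtain ⟨t, ht⟩ := hWc.elim_finite_subcover (fun s : S => (s : Set (Closeds Y)))
    (fun s => hbasis.isOpen (hSsub s.2)) hcov
  have heq : ⋃₀ S = ⋃ s ∈ t, (s : Set (Closeds Y)) := by
    apply subset_antisymm
    · intro A hA
      obtain ⟨i, hit, hAi⟩ := mem_iUnion₂.mp (ht hA)
      exact mem_iUnion₂.mpr ⟨i, hit, hAi⟩
    · rintro A hA
      obtain ⟨i, _, hAi⟩ := mem_iUnion₂.mp hA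
      exact ⟨i, i.2, hAi⟩
  rw [heq, preimage_iUnion₂]
  exact t.isCompact_biUnion fun i _ => hpre _ (hSsub i.2)


lemma sum_basis {X₁ X₂ : Type u} [TopologicalSpace X₁] [TopologicalSpace X₂]
    [SpectralSpace' X₁] [SpectralSpace' X₂] :
    IsTopologicalBasis {U : Set (X₁ ⊕ X₂) | IsCompact U ∧ IsOpen U} := by
  refine isTopologicalBasis_of_isOpen_of_nhds (fun u hu => hu.2) ?_
  rintro (x | y) u hau hu
  · obtain ⟨K, ⟨hKc, hKo⟩, hxK, hKu⟩ :=
      (SpectralSpace'.isTopologicalBasis (X := X₁)).exists_subset_of_mem_open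
        (show x ∈ Sum.inl ⁻¹' u from hau) (hu.preimage continuous_inl)
    refine ⟨Sum.inl '' K, ⟨hKc.image continuous_inl, isOpenMap_inl K hKo⟩,
      ⟨x, hxK, rfl⟩, ?_⟩
    rintro _ ⟨x', hx', rfl⟩
    exact hKu hx'
  · obtain ⟨K, ⟨hKc, hKo⟩, hyK, hKu⟩ :=
      (SpectralSpace'.isTopologicalBasis (X := X₂)).exists_subset_of_mem_open
        (show y ∈ Sum.inr ⁻¹' u from hau) (hu.preimage continuous_inr)
    refine ⟨Sum.inr '' K, ⟨hKc.image continuous_inr, isOpenMap_inr K hKo⟩,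
      ⟨y, hyK, rfl⟩, ?_⟩
    rintro _ ⟨y', hy', rfl⟩
    exact hKu hy'

end SPAux

/-- A relation `r` from a space `X` to a space `Y` is a spectral relation if every fiber
`r[x] = {y | r x y}` is closed in `Y` and the induced map `X → V Y`, `x ↦ r[x]`, is spectral
(where `V Y` carries the lower Vietoris topology). -/
def IsSpectralRel {X Y : Type u} [TopologicalSpace X] [TopologicalSpace Y]
    (r : X → Y → Prop) : Prop :=
  ∃ h : ∀ x, IsClosed {y | r x y},
    IsSpectralMap fun x => (⟨{y | r x y}, h x⟩ : Closeds Y)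

/-- Let `X₁`, `X₂`, `Z` be spectral spaces, `r` a spectral relation from `Z` to `X₁` and `s` a
spectral relation from `Z` to `X₂`.  Then the relation `t = ⟨r, s⟩` from `Z` to the topological
sum `X₁ ⊕ X₂` given by `t z (inl x) ↔ r z x` and `t z (inr y) ↔ s z y` is a spectral relation,
and it is the unique spectral relation `t` from `Z` to `X₁ ⊕ X₂` with
`(∃ w, t z w ∧ inl x ∈ closure {w}) ↔ r z x` and `(∃ w, t z w ∧ inr y ∈ closure {w}) ↔ s z y`
(these composites are the composites of `t` with the projections `i₁^*`, `i₂^*`).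
Consequently the topological sum `X₁ ⊕ X₂` is the product of `X₁` and `X₂` in the category of
spectral spaces and spectral relations. -/
theorem spectralRel_pairing_unique (X₁ X₂ Z : Type u)
    [TopologicalSpace X₁] [TopologicalSpace X₂] [TopologicalSpace Z]
    [SpectralSpace' X₁] [SpectralSpace' X₂] [SpectralSpace' Z]
    (r : Z → X₁ → Prop) (s : Z → X₂ → Prop)
    (hr : IsSpectralRel r) (hs : IsSpectralRel s) :
    IsSpectralRel (fun z w => Sum.elim (r z) (s z) w) ∧
    (∀ z x, (∃ w, Sum.elim (r z) (s z) w ∧ Sum.inl x ∈ closure {w}) ↔ r z x) ∧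
    (∀ z y, (∃ w, Sum.elim (r z) (s z) w ∧ Sum.inr y ∈ closure {w}) ↔ s z y) ∧
    ∀ t : Z → X₁ ⊕ X₂ → Prop, IsSpectralRel t →
      (∀ z x, (∃ w, t z w ∧ Sum.inl x ∈ closure {w}) ↔ r z x) →
      (∀ z y, (∃ w, t z w ∧ Sum.inr y ∈ closure {w}) ↔ s z y) →
      t = fun z w => Sum.elim (r z) (s z) w := by
  obtain ⟨hrcl, hrsp⟩ := hr
  obtain ⟨hscl, hssp⟩ := hs
  -- closedness of fibers of the pairing
  have hclosed : ∀ z, IsClosed {w : X₁ ⊕ X₂ | Sum.elim (r z) (s z) w} := by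
    intro z
    rw [isClosed_sum_iff]
    exact ⟨hrcl z, hscl z⟩
  set f : Z → Closeds (X₁ ⊕ X₂) :=
    fun z => ⟨{w | Sum.elim (r z) (s z) w}, hclosed z⟩ with hfdef
  set fr : Z → Closeds X₁ := fun z => ⟨{x | r z x}, hrcl z⟩ with hfrdef
  set fs' : Z → Closeds X₂ := fun z => ⟨{y | s z y}, hscl z⟩ with hfsdef
  have hdecomp : ∀ U : Set (X₁ ⊕ X₂),
      f ⁻¹' SPAux.dia U =
        fr ⁻¹' SPAux.dia (Sum.inl ⁻¹' U) ∪ fs' ⁻¹' SPAux.dia (Sum.inr ⁻¹' U) := by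
    intro U
    ext z
    constructor
    · rintro ⟨w, hw, hwU⟩
      cases w with
      | inl x => exact Or.inl ⟨x, hw, hwU⟩
      | inr y => exact Or.inr ⟨y, hw, hwU⟩
    · rintro (⟨x, hx, hxU⟩ | ⟨y, hy, hyU⟩)
      exacts [⟨Sum.inl x, hx, hxU⟩, ⟨Sum.inr y, hy, hyU⟩]
  have hcont : Continuous f := by
    apply continuous_generateFrom_iff.mpr
    rintro _ ⟨U, hU, rfl⟩
    show IsOpen (f ⁻¹' SPAux.dia U)
    rw [hdecomp U]
    exact ((SPAux.isOpen_dia (hU.preimage continuous_inl)).preimage hrsp.continuous).union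
      ((SPAux.isOpen_dia (hU.preimage continuous_inr)).preimage hssp.continuous)
  have hdia : ∀ K : Set (X₁ ⊕ X₂), IsCompact K → IsOpen K →
      IsCompact (f ⁻¹' SPAux.dia K) := by
    intro K hKc hKo
    rw [hdecomp K]
    have h1c : IsCompact (Sum.inl ⁻¹' K) := by
      apply (Topology.IsEmbedding.inl : IsEmbedding (Sum.inl : X₁ → X₁ ⊕ X₂)).isCompact_iff.mpr
      rw [Set.image_preimage_eq_inter_range]
      exact hKc.inter_right isClosed_range_inl
    have h2c : IsCompact (Sum.inr ⁻¹' K) := by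
      apply (Topology.IsEmbedding.inr : IsEmbedding (Sum.inr : X₂ → X₁ ⊕ X₂)).isCompact_iff.mpr
      rw [Set.image_preimage_eq_inter_range]
      exact hKc.inter_right isClosed_range_inr
    exact (hrsp.isCompact_preimage_of_isOpen
        (SPAux.isOpen_dia (hKo.preimage continuous_inl)) (SPAux.isCompact_dia h1c)).union
      (hssp.isCompact_preimage_of_isOpen
        (SPAux.isOpen_dia (hKo.preimage continuous_inr)) (SPAux.isCompact_dia h2c))
  have hspec : IsSpectralMap f :=
    ⟨hcont, fun W hWo hWc =>
      SPAux.isCompact_preimage_vietoris SPAux.sum_basis hcont hdia hWo hWc⟩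
  -- part 2
  have part2 : ∀ z x, (∃ w, Sum.elim (r z) (s z) w ∧ Sum.inl x ∈ closure {w}) ↔ r z x := by
    intro z x
    constructor
    · rintro ⟨w, hw, hxw⟩
      cases w with
      | inl x' =>
        have h1 : closure ({Sum.inl x'} : Set (X₁ ⊕ X₂)) = Sum.inl '' closure ({x'} : Set X₁) := by
          rw [← Set.image_singleton, (Topology.IsClosedEmbedding.inl : IsClosedEmbedding (Sum.inl : X₁ → X₁ ⊕ X₂)).closure_image_eq]
        rw [h1] at hxw
        obtain ⟨x'', hx'', hEq⟩ := hxw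
        have hx2 : x ∈ closure ({x'} : Set X₁) := (Sum.inl_injective hEq) ▸ hx''
        exact closure_minimal (Set.singleton_subset_iff.mpr hw) (hrcl z) hx2
      | inr y' =>
        exfalso
        have : Sum.inl x ∈ Set.range (Sum.inr : X₂ → X₁ ⊕ X₂) :=
          closure_minimal (Set.singleton_subset_iff.mpr (Set.mem_range_self y'))
            isClosed_range_inr hxw
        obtain ⟨y, hy⟩ := this
        simp at hy
    · intro hx
      exact ⟨Sum.inl x, hx, subset_closure rfl⟩
  have part3 : ∀ z y, (∃ w, Sum.elim (r z) (s z) w ∧ Sum.inr y ∈ closure {w}) ↔ s z y := by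
    intro z y
    constructor
    · rintro ⟨w, hw, hyw⟩
      cases w with
      | inr y' =>
        have h1 : closure ({Sum.inr y'} : Set (X₁ ⊕ X₂)) = Sum.inr '' closure ({y'} : Set X₂) := by
          rw [← Set.image_singleton, (Topology.IsClosedEmbedding.inr : IsClosedEmbedding (Sum.inr : X₂ → X₁ ⊕ X₂)).closure_image_eq]
        rw [h1] at hyw
        obtain ⟨y'', hy'', hEq⟩ := hyw
        have hy2 : y ∈ closure ({y'} : Set X₂) := (Sum.inr_injective hEq) ▸ hy''
        exact closure_minimal (Set.singleton_subset_iff.mpr hw) (hscl z) hy2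
      | inl x' =>
        exfalso
        have : Sum.inr y ∈ Set.range (Sum.inl : X₁ → X₁ ⊕ X₂) :=
          closure_minimal (Set.singleton_subset_iff.mpr (Set.mem_range_self x'))
            isClosed_range_inl hyw
        obtain ⟨x, hx⟩ := this
        simp at hx
    · intro hy
      exact ⟨Sum.inr y, hy, subset_closure rfl⟩
  refine ⟨⟨hclosed, hspec⟩, part2, part3, ?_⟩
  intro t ht ht1 ht2
  obtain ⟨htcl, -⟩ := ht
  funext z w
  apply propext
  have hclo : ∀ w' : X₁ ⊕ X₂, t z w' → closure {w'} ⊆ {w | t z w} := fun w' hw' =>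
    closure_minimal (Set.singleton_subset_iff.mpr hw') (htcl z)
  cases w with
  | inl x =>
    constructor
    · intro h
      exact (ht1 z x).mp ⟨Sum.inl x, h, subset_closure rfl⟩
    · intro hx
      obtain ⟨w', hw', hcl'⟩ := (ht1 z x).mpr hx
      exact hclo w' hw' hcl'
  | inr y =>
    constructor
    · intro h
      exact (ht2 z y).mp ⟨Sum.inr y, h, subset_closure rfl⟩
    · intro hy
      obtain ⟨w', hw', hcl'⟩ := (ht2 z y).mpr hy
      exact hclo w' hw' hcl'
end

section
/- Let X, Y and Z be spectral spaces and let f : K(X) × K(Y) → K(Z) be a bimorphism on compact open sets, i.e. f(∅, B) = ∅ = f(A, ∅), f(A ∪ A', B) = f(A,B) ∪ f(A',B) and f(A, B ∪ B') = f(A,B) ∪ f(A,B') for all compact opens A, A' of X and B, B' of Y. Then there exists a unique map g : K(X × Y) → K(Z) on compact open subsets of the product space X × Y which preserves the empty set and binary unions and satisfies g(A × B) = f(A, B) for all compact opens A of X and B of Y. (In particular, the lattice K(X × Y) together with the bimorphism (A,B) ↦ A × B represents bimorphisms out of K(X) × K(Y) into lattices of the form K(Z).) -/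
open TopologicalSpace

universe u

lemma coe_finset_sup_compactOpens {α : Type*} [TopologicalSpace α] {ι : Type*}
    (t : Finset ι) (u : ι → CompactOpens α) :
    ((t.sup u : CompactOpens α) : Set α) = ⋃ i ∈ t, (u i : Set α) := by
  classical
  induction t using Finset.induction with
  | empty => simp
  | insert h ih => simp_all [Finset.sup_insert]

lemma coe_finset_inf_compactOpens {α : Type*} [TopologicalSpace α] [CompactSpace α]
    [QuasiSeparatedSpace α] {ι : Type*} (t : Finset ι) (u : ι → CompactOpens α) :
    ((t.inf u : CompactOpens α) : Set α) = ⋂ i ∈ t, (u i : Set α) := by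
  classical
  induction t using Finset.induction with
  | empty => simp
  | insert h ih => simp_all [Finset.inf_insert]

/-- Let `X`, `Y`, `Z` be spectral spaces and let `f : K(X) × K(Y) → K(Z)` be a bimorphism on
the lattices of compact open sets, i.e. `f(∅, B) = ∅ = f(A, ∅)`,
`f(A ∪ A', B) = f(A, B) ∪ f(A', B)` and `f(A, B ∪ B') = f(A, B) ∪ f(A, B')`.  Then there is a
unique map `g : K(X × Y) → K(Z)` preserving `∅` and binary unions such that
`g(A × B) = f(A, B)` for all compact opens `A` of `X` and `B` of `Y`.  (In particular,
`K(X × Y)` together with the bimorphism `(A, B) ↦ A × B` represents bimorphisms from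
`K(X) × K(Y)` into lattices of the form `K(Z)`.) -/
theorem compactOpens_prod_represents_bimorphisms
    (X Y Z : Type u) [TopologicalSpace X] [TopologicalSpace Y] [TopologicalSpace Z]
    [SpectralSpace' X] [SpectralSpace' Y] [SpectralSpace' Z]
    (f : CompactOpens X × CompactOpens Y → CompactOpens Z)
    (hbot₁ : ∀ B, f (⊥, B) = ⊥) (hbot₂ : ∀ A, f (A, ⊥) = ⊥)
    (hsup₁ : ∀ A A' B, f (A ⊔ A', B) = f (A, B) ⊔ f (A', B))
    (hsup₂ : ∀ A B B', f (A, B ⊔ B') = f (A, B) ⊔ f (A, B')) :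
    ∃! g : CompactOpens (X × Y) → CompactOpens Z,
      (g ⊥ = ⊥ ∧ ∀ W W', g (W ⊔ W') = g W ⊔ g W') ∧
        ∀ (A : CompactOpens X) (B : CompactOpens Y), g (A ×ˢ B) = f (A, B) := by
  classical
  haveI : CompactSpace X := SpectralSpace'.toCompactSpace
  haveI : CompactSpace Y := SpectralSpace'.toCompactSpace
  haveI : QuasiSeparatedSpace X := SpectralSpace'.toQuasiSeparatedSpace
  haveI : QuasiSeparatedSpace Y := SpectralSpace'.toQuasiSeparatedSpace
  -- monotonicity of `f`
  have hmono : ∀ (A A' : CompactOpens X) (B B' : CompactOpens Y), A ≤ A' → B ≤ B' →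
      f (A, B) ≤ f (A', B') := by
    intro A A' B B' h1 h2
    calc f (A, B) ≤ f (A', B) := by
          rw [show A' = A ⊔ A' from (sup_eq_right.2 h1).symm, hsup₁]; exact le_sup_left
      _ ≤ f (A', B') := by
          rw [show B' = B ⊔ B' from (sup_eq_right.2 h2).symm, hsup₂]; exact le_sup_left
  -- finitary sup preservation
  have hsupF₁ : ∀ {ι : Type u} (t : Finset ι) (u : ι → CompactOpens X) (B : CompactOpens Y),
      f (t.sup u, B) = t.sup fun i => f (u i, B) := by
    intro ι t u B
    induction t using Finset.induction with
    | empty => simpa using hbot₁ B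
    | insert _ _ h ih => rw [Finset.sup_insert, Finset.sup_insert, hsup₁, ih]
  have hsupF₂ : ∀ {ι : Type u} (t : Finset ι) (A : CompactOpens X) (u : ι → CompactOpens Y),
      f (A, t.sup u) = t.sup fun i => f (A, u i) := by
    intro ι t A u
    induction t using Finset.induction with
    | empty => simpa using hbot₂ A
    | insert _ _ h ih => rw [Finset.sup_insert, Finset.sup_insert, hsup₂, ih]
  -- key lemma: if a rectangle is covered by finitely many rectangles, then `f` of the
  -- rectangle is dominated by the sup of `f` of the covering rectangles
  have key : ∀ (s : Finset (CompactOpens X × CompactOpens Y)) (A : CompactOpens X) (B : CompactOpens Y),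
      (A : Set X) ×ˢ (B : Set Y) ⊆ (⋃ p ∈ s, (p.1 : Set X) ×ˢ (p.2 : Set Y)) →
      f (A, B) ≤ s.sup f := by
    intro s A B hcov
    set good : Finset (Finset (CompactOpens X × CompactOpens Y)) :=
      s.powerset.filter (fun T => (B : Set Y) ⊆ ⋃ p ∈ T, (p.2 : Set Y)) with hgood
    have hA : A = good.sup (fun T => A ⊓ T.inf (fun p => p.1)) := by
      apply SetLike.coe_injective
      rw [coe_finset_sup_compactOpens]
      apply Set.Subset.antisymm
      · intro x hx
        set T : Finset (CompactOpens X × CompactOpens Y) := s.filter (fun p => x ∈ (p.1 : Set X)) with hT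
        have hTgood : T ∈ good := by
          rw [hgood, Finset.mem_filter, Finset.mem_powerset]
          refine ⟨Finset.filter_subset _ _, fun b hb => ?_⟩
          obtain ⟨p, hps, hxp, hbp⟩ : ∃ p ∈ s, x ∈ (p.1 : Set X) ∧ b ∈ (p.2 : Set Y) := by
            have := hcov (Set.mk_mem_prod hx hb)
            simp only [Set.mem_iUnion, Set.mem_prod] at this
            obtain ⟨p, hps, h1, h2⟩ := this
            exact ⟨p, hps, h1, h2⟩
          exact Set.mem_biUnion (hT ▸ Finset.mem_filter.2 ⟨hps, hxp⟩) hbp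
        refine Set.mem_biUnion hTgood ?_
        simp only [CompactOpens.coe_inf, Set.mem_inter_iff]
        refine ⟨hx, ?_⟩
        rw [coe_finset_inf_compactOpens]
        simp only [Set.mem_iInter]
        intro p hp
        rw [hT, Finset.mem_filter] at hp
        exact hp.2
      · intro x hx
        simp only [Set.mem_iUnion, CompactOpens.coe_inf, Set.mem_inter_iff] at hx
        obtain ⟨T, _, hxA, _⟩ := hx
        exact hxA
    calc f (A, B) = good.sup (fun T => f (A ⊓ T.inf (fun p => p.1), B)) := by
          conv_lhs => rw [hA]
          exact hsupF₁ _ _ _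
      _ ≤ s.sup f := by
          apply Finset.sup_le
          intro T hT
          rw [hgood, Finset.mem_filter, Finset.mem_powerset] at hT
          obtain ⟨hTs, hTB⟩ := hT
          have hB : B = T.sup (fun p => B ⊓ p.2) := by
            apply SetLike.coe_injective
            rw [coe_finset_sup_compactOpens]
            apply Set.Subset.antisymm
            · intro b hb
              obtain ⟨p, hpT, hbp⟩ := Set.mem_iUnion₂.1 (hTB hb)
              exact Set.mem_biUnion hpT (by simp [hb, hbp])
            · intro b hb
              simp only [Set.mem_iUnion, CompactOpens.coe_inf, Set.mem_inter_iff] at hb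
              obtain ⟨p, _, hbB, _⟩ := hb
              exact hbB
          rw [hB, hsupF₂]
          apply Finset.sup_le
          intro p hp
          have h1 : A ⊓ T.inf (fun p => p.1) ≤ p.1 :=
            le_trans inf_le_right (Finset.inf_le hp)
          have : f (p.1, p.2) ≤ s.sup f := by
            have := Finset.le_sup (f := f) (hTs hp)
            simpa using this
          exact le_trans (hmono _ p.1 _ p.2 h1 inf_le_right) this
  -- monotonicity lemma on finite families of rectangles
  have mono2 : ∀ s t : Finset (CompactOpens X × CompactOpens Y),
      (⋃ p ∈ s, (p.1 : Set X) ×ˢ (p.2 : Set Y)) ⊆ (⋃ p ∈ t, (p.1 : Set X) ×ˢ (p.2 : Set Y)) →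
      s.sup f ≤ t.sup f := by
    intro s t h
    apply Finset.sup_le
    intro p hp
    have hsub : (p.1 : Set X) ×ˢ (p.2 : Set Y) ⊆
        ⋃ q ∈ t, (q.1 : Set X) ×ˢ (q.2 : Set Y) :=
      fun z hz => h (Set.mem_biUnion hp hz)
    simpa using key t p.1 p.2 hsub
  -- every compact open of the product is a finite union of rectangles
  have rep : ∀ W : CompactOpens (X × Y), ∃ s : Finset (CompactOpens X × CompactOpens Y),
      (W : Set (X × Y)) = ⋃ p ∈ s, (p.1 : Set X) ×ˢ (p.2 : Set Y) := by
    intro W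
    have hbasis := (SpectralSpace'.isTopologicalBasis (X := X)).prod
      (SpectralSpace'.isTopologicalBasis (X := Y))
    have hx : ∀ x : W, ∃ p : CompactOpens X × CompactOpens Y, (x : X × Y) ∈ (p.1 : Set X) ×ˢ (p.2 : Set Y) ∧
        (p.1 : Set X) ×ˢ (p.2 : Set Y) ⊆ W := by
      rintro ⟨x, hx⟩
      obtain ⟨S, hS, hxS, hSW⟩ := hbasis.exists_subset_of_mem_open hx W.isOpen
      obtain ⟨U, hU, V, hV, rfl⟩ := hS
      exact ⟨(⟨⟨U, hU.1⟩, hU.2⟩, ⟨⟨V, hV.1⟩, hV.2⟩), hxS, hSW⟩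
    choose p hp1 hp2 using hx
    obtain ⟨t, ht⟩ := W.isCompact.elim_finite_subcover
      (fun x : W => ((p x).1 : Set X) ×ˢ ((p x).2 : Set Y))
      (fun x => ((p x).1.isOpen.prod (p x).2.isOpen))
      (fun z hz => Set.mem_iUnion.2 ⟨⟨z, hz⟩, hp1 ⟨z, hz⟩⟩)
    refine ⟨t.image p, Set.Subset.antisymm ?_ ?_⟩
    · intro z hz
      obtain ⟨x, hxt, hzx⟩ := Set.mem_iUnion₂.1 (ht hz)
      exact Set.mem_biUnion (Finset.mem_image_of_mem p hxt) hzx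
    · apply Set.iUnion₂_subset
      intro q hq
      obtain ⟨x, _, rfl⟩ := Finset.mem_image.1 hq
      exact hp2 x
  choose r hr using rep
  refine ⟨fun W => (r W).sup f, ⟨⟨?_, ?_⟩, ?_⟩, ?_⟩
  · -- g ⊥ = ⊥
    refine le_antisymm ?_ bot_le
    have : (r ⊥).sup f ≤ (∅ : Finset (CompactOpens X × CompactOpens Y)).sup f := by
      apply mono2
      rw [← hr ⊥]
      simp
    simpa using this
  · -- g (W ⊔ W') = g W ⊔ g W'
    intro W W'
    have hunion : (⋃ p ∈ r (W ⊔ W'), (p.1 : Set X) ×ˢ (p.2 : Set Y)) =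
        ⋃ p ∈ r W ∪ r W', (p.1 : Set X) ×ˢ (p.2 : Set Y) := by
      rw [← hr (W ⊔ W'), Finset.set_biUnion_union, ← hr W, ← hr W']
      rfl
    have h1 := mono2 (r (W ⊔ W')) (r W ∪ r W') hunion.le
    have h2 := mono2 (r W ∪ r W') (r (W ⊔ W')) hunion.ge
    rw [Finset.sup_union] at h1 h2
    exact le_antisymm h1 h2
  · -- g (A ×ˢ B) = f (A, B)
    intro A B
    have hAB : (⋃ p ∈ r (A ×ˢ B), (p.1 : Set X) ×ˢ (p.2 : Set Y)) =
        ⋃ p ∈ ({(A, B)} : Finset (CompactOpens X × CompactOpens Y)), (p.1 : Set X) ×ˢ (p.2 : Set Y) := by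
      rw [← hr (A ×ˢ B)]
      simp [CompactOpens.coe_prod]
    show (r (A ×ˢ B)).sup f = f (A, B)
    have h1 := mono2 (r (A ×ˢ B)) {(A, B)} hAB.le
    have h2 := mono2 ({(A, B)} : Finset (CompactOpens X × CompactOpens Y)) (r (A ×ˢ B)) hAB.ge
    rw [Finset.sup_singleton] at h1 h2
    exact le_antisymm h1 h2
  · -- uniqueness
    rintro g' ⟨⟨hg'bot, hg'sup⟩, hg'prod⟩
    funext W
    have hW : W = (r W).sup (fun p => p.1 ×ˢ p.2) := by
      apply SetLike.coe_injective
      rw [coe_finset_sup_compactOpens, hr W]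
      simp [CompactOpens.coe_prod]
    have hfin : ∀ (t : Finset (CompactOpens X × CompactOpens Y)), g' (t.sup (fun p => p.1 ×ˢ p.2)) = t.sup f := by
      intro t
      induction t using Finset.induction with
      | empty => simpa using hg'bot
      | insert _ _ h ih =>
        rw [Finset.sup_insert, Finset.sup_insert, hg'sup, ih, hg'prod]
    calc g' W = g' ((r W).sup (fun p => p.1 ×ˢ p.2)) := by rw [← hW]
      _ = (r W).sup f := hfin _
end

section
/- For all bounded distributive lattices L and M, their tensor product in the category of bounded distributive lattices with maps preserving finite suprema (⊥ and binary ∨) exists: there is a bounded distributive lattice L ⊗ M together with a bimorphism p : L × M → L ⊗ M such that for every bounded distributive lattice N and every bimorphism f : L × M → N there exists a unique map f̄ : L ⊗ M → N preserving ⊥ and binary ∨ with f̄ ∘ p = f. -/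
universe u v w
set_option linter.unusedSectionVars false
set_option linter.unusedVariables false

/-- A map `f : L × M → N` is a bimorphism if it preserves `⊥` and binary `∨` in each
variable separately. -/
def IsSupBotBimorphism {L M N : Type*} [Lattice L] [OrderBot L] [Lattice M] [OrderBot M]
    [Lattice N] [OrderBot N] (f : L × M → N) : Prop :=
  (∀ a : L, f (a, ⊥) = ⊥) ∧ (∀ (a : L) (b b' : M), f (a, b ⊔ b') = f (a, b) ⊔ f (a, b')) ∧
    (∀ b : M, f (⊥, b) = ⊥) ∧ ∀ (a a' : L) (b : M), f (a ⊔ a', b) = f (a, b) ⊔ f (a', b)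




namespace DLTensor

variable {L : Type u} {M : Type v} [DistribLattice L] [BoundedOrder L]
  [DistribLattice M] [BoundedOrder M]

/-- Membership in the bi-ideal of `L × M` generated by a finite set `S`. -/
inductive BiIdeal (S : Finset (L × M)) : L → M → Prop where
  | gen (a b) : (a, b) ∈ S → BiIdeal S a b
  | botl (b) : BiIdeal S ⊥ b
  | botr (a) : BiIdeal S a ⊥
  | mono {a b} (a' b') : BiIdeal S a b → a' ≤ a → b' ≤ b → BiIdeal S a' b'
  | supl {a a' b} : BiIdeal S a b → BiIdeal S a' b → BiIdeal S (a ⊔ a') b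
  | supr {a b b'} : BiIdeal S a b → BiIdeal S a b' → BiIdeal S a (b ⊔ b')

/-- Preorder on finite sets of pure tensors. -/
def tle (S T : Finset (L × M)) : Prop := ∀ z ∈ S, BiIdeal T z.1 z.2

theorem biIdeal_of_tle {S T : Finset (L × M)} (h : tle S T) {a b} :
    BiIdeal S a b → BiIdeal T a b := by
  intro hb
  induction hb with
  | gen a b hm => exact h _ hm
  | botl b => exact .botl b
  | botr a => exact .botr a
  | mono a' b' _ h1 h2 ih => exact .mono a' b' ih h1 h2
  | supl _ _ ih1 ih2 => exact .supl ih1 ih2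
  | supr _ _ ih1 ih2 => exact .supr ih1 ih2

theorem tle_refl (S : Finset (L × M)) : tle S S := fun z hz => .gen z.1 z.2 hz

theorem tle_trans {S T U : Finset (L × M)} (h1 : tle S T) (h2 : tle T U) : tle S U :=
  fun z hz => biIdeal_of_tle h2 (h1 z hz)

attribute [local instance] Classical.decEq

/-- Pointwise meet of two finite sets of pure tensors. -/
noncomputable def tmeet (S T : Finset (L × M)) : Finset (L × M) :=
  (S ×ˢ T).image fun z => (z.1.1 ⊓ z.2.1, z.1.2 ⊓ z.2.2)

theorem mem_tmeet {S T : Finset (L × M)} {a b c d} (h1 : (a, b) ∈ S) (h2 : (c, d) ∈ T) :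
    (a ⊓ c, b ⊓ d) ∈ tmeet S T := by
  have : ((a, b), (c, d)) ∈ S ×ˢ T := Finset.mem_product.2 ⟨h1, h2⟩
  simpa [tmeet] using Finset.mem_image_of_mem
    (fun z : (L × M) × (L × M) => (z.1.1 ⊓ z.2.1, z.1.2 ⊓ z.2.2)) this

theorem biIdeal_inf_gen {S T : Finset (L × M)} {a b} (hab : (a, b) ∈ S) {u v}
    (h : BiIdeal T u v) : BiIdeal (tmeet S T) (u ⊓ a) (v ⊓ b) := by
  induction h with
  | gen c d hcd =>
      have := BiIdeal.gen (S := tmeet S T) _ _ (mem_tmeet hab hcd)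
      rw [inf_comm a c, inf_comm b d] at this
      exact this
  | botl b' => exact .mono _ _ (.botl (b' ⊓ b)) (by simp) le_rfl
  | botr a' => exact .mono _ _ (.botr (a' ⊓ a)) le_rfl (by simp)
  | mono u' v' _ h1 h2 ih =>
      exact .mono _ _ ih (inf_le_inf_right a h1) (inf_le_inf_right b h2)
  | supl _ _ ih1 ih2 =>
      rw [inf_sup_right]
      exact .supl ih1 ih2
  | supr _ _ ih1 ih2 =>
      rw [inf_sup_right]
      exact .supr ih1 ih2

theorem biIdeal_inf {S T : Finset (L × M)} {x y} (hx : BiIdeal S x y) {u v}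
    (hu : BiIdeal T u v) : BiIdeal (tmeet S T) (x ⊓ u) (y ⊓ v) := by
  induction hx with
  | gen a b hab =>
      have := biIdeal_inf_gen hab hu
      rw [inf_comm u a, inf_comm v b] at this
      exact this
  | botl b => exact .mono _ _ (.botl (b ⊓ v)) (by simp) le_rfl
  | botr a => exact .mono _ _ (.botr (a ⊓ u)) le_rfl (by simp)
  | mono a' b' _ h1 h2 ih =>
      exact .mono _ _ ih (inf_le_inf_right u h1) (inf_le_inf_right v h2)
  | supl _ _ ih1 ih2 =>
      rw [inf_sup_right]
      exact .supl ih1 ih2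
  | supr _ _ ih1 ih2 =>
      rw [inf_sup_right]
      exact .supr ih1 ih2

theorem tmeet_le_left {S T : Finset (L × M)} : tle (tmeet S T) S := by
  intro z hz
  simp only [tmeet, Finset.mem_image, Finset.mem_product] at hz
  obtain ⟨⟨⟨a, b⟩, ⟨c, d⟩⟩, ⟨h1, h2⟩, rfl⟩ := hz
  exact .mono _ _ (.gen a b h1) inf_le_left inf_le_left

theorem tmeet_le_right {S T : Finset (L × M)} : tle (tmeet S T) T := by
  intro z hz
  simp only [tmeet, Finset.mem_image, Finset.mem_product] at hz
  obtain ⟨⟨⟨a, b⟩, ⟨c, d⟩⟩, ⟨h1, h2⟩, rfl⟩ := hz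
  exact .mono _ _ (.gen c d h2) inf_le_right inf_le_right

theorem le_tmeet {U S T : Finset (L × M)} (h1 : tle U S) (h2 : tle U T) :
    tle U (tmeet S T) := by
  intro z hz
  have := biIdeal_inf (h1 z hz) (h2 z hz)
  simpa using this

theorem tle_tmeet_tmeet {S S' T T' : Finset (L × M)} (h1 : tle S S') (h2 : tle T T') :
    tle (tmeet S T) (tmeet S' T') :=
  le_tmeet (tle_trans tmeet_le_left h1) (tle_trans tmeet_le_right h2)

theorem tle_union_left {S T : Finset (L × M)} : tle S (S ∪ T) :=
  fun z hz => .gen z.1 z.2 (Finset.mem_union_left _ hz)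

theorem tle_union_right {S T : Finset (L × M)} : tle T (S ∪ T) :=
  fun z hz => .gen z.1 z.2 (Finset.mem_union_right _ hz)

theorem tle_union {S T U : Finset (L × M)} (h1 : tle S U) (h2 : tle T U) :
    tle (S ∪ T) U := by
  intro z hz
  rcases Finset.mem_union.1 hz with h | h
  · exact h1 z h
  · exact h2 z h

instance TPSetoid (L : Type u) (M : Type v) [DistribLattice L] [BoundedOrder L]
    [DistribLattice M] [BoundedOrder M] : Setoid (Finset (L × M)) :=
  ⟨fun S T => tle S T ∧ tle T S,
    fun S => ⟨tle_refl S, tle_refl S⟩,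
    fun h => ⟨h.2, h.1⟩,
    fun h1 h2 => ⟨tle_trans h1.1 h2.1, tle_trans h2.2 h1.2⟩⟩

/-- The tensor product of bounded distributive lattices. -/
def TP (L : Type u) (M : Type v) [DistribLattice L] [BoundedOrder L]
    [DistribLattice M] [BoundedOrder M] : Type (max u v) :=
  Quotient (TPSetoid L M)

variable (L M) in
def TP.mk (S : Finset (L × M)) : TP L M := Quotient.mk (TPSetoid L M) S

instance : PartialOrder (TP L M) where
  le := Quotient.lift₂ tle (fun _ _ _ _ ha hb => propext
    ⟨fun h => tle_trans (tle_trans ha.2 h) hb.1, fun h => tle_trans (tle_trans ha.1 h) hb.2⟩)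
  le_refl q := Quotient.inductionOn q tle_refl
  le_trans q1 q2 q3 := Quotient.inductionOn₃ q1 q2 q3 (fun _ _ _ => tle_trans)
  le_antisymm q1 q2 := Quotient.inductionOn₂ q1 q2
    (fun _ _ h1 h2 => Quotient.sound ⟨h1, h2⟩)

noncomputable instance : Lattice (TP L M) where
  sup := Quotient.map₂ (· ∪ ·) (fun _ _ ha _ _ hb =>
    ⟨tle_union (tle_trans ha.1 tle_union_left) (tle_trans hb.1 tle_union_right),
     tle_union (tle_trans ha.2 tle_union_left) (tle_trans hb.2 tle_union_right)⟩)
  le_sup_left q1 q2 := Quotient.inductionOn₂ q1 q2 (fun _ _ => tle_union_left)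
  le_sup_right q1 q2 := Quotient.inductionOn₂ q1 q2 (fun _ _ => tle_union_right)
  sup_le q1 q2 q3 := Quotient.inductionOn₃ q1 q2 q3 (fun _ _ _ => tle_union)
  inf := Quotient.map₂ tmeet (fun _ _ ha _ _ hb =>
    ⟨tle_tmeet_tmeet ha.1 hb.1, tle_tmeet_tmeet ha.2 hb.2⟩)
  inf_le_left q1 q2 := Quotient.inductionOn₂ q1 q2 (fun _ _ => tmeet_le_left)
  inf_le_right q1 q2 := Quotient.inductionOn₂ q1 q2 (fun _ _ => tmeet_le_right)
  le_inf q1 q2 q3 := Quotient.inductionOn₃ q1 q2 q3 (fun _ _ _ => le_tmeet)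

theorem TP.sup_def (S T : Finset (L × M)) : TP.mk L M S ⊔ TP.mk L M T = TP.mk L M (S ∪ T) := rfl

theorem TP.inf_def (S T : Finset (L × M)) :
    TP.mk L M S ⊓ TP.mk L M T = TP.mk L M (tmeet S T) := rfl

noncomputable instance : DistribLattice (TP L M) where
  le_sup_inf q1 q2 q3 := Quotient.inductionOn₃ q1 q2 q3 (by
    intro S T U z hz
    simp only [tmeet, Finset.mem_image, Finset.mem_product] at hz
    obtain ⟨⟨⟨a, b⟩, ⟨c, d⟩⟩, ⟨h1, h2⟩, rfl⟩ := hz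
    rcases Finset.mem_union.1 h1 with h1 | h1
    · exact .mono _ _ (.gen a b (Finset.mem_union_left _ h1)) inf_le_left inf_le_left
    rcases Finset.mem_union.1 h2 with h2 | h2
    · exact .mono _ _ (.gen c d (Finset.mem_union_left _ h2)) inf_le_right inf_le_right
    · exact .gen _ _ (Finset.mem_union_right _ (mem_tmeet h1 h2)))

noncomputable instance : BoundedOrder (TP L M) where
  top := TP.mk L M {(⊤, ⊤)}
  le_top q := Quotient.inductionOn q (fun S z _ =>
    .mono _ _ (.gen ⊤ ⊤ (Finset.mem_singleton_self _)) le_top le_top)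
  bot := TP.mk L M ∅
  bot_le q := Quotient.inductionOn q (fun S z hz => absurd hz (Finset.notMem_empty z))

theorem TP.bot_def : (⊥ : TP L M) = TP.mk L M ∅ := rfl

end DLTensor


/-- For all bounded distributive lattices `L` and `M`, their tensor product in the category of
bounded distributive lattices with finite-suprema-preserving maps exists: there are a bounded
distributive lattice `P = L ⊗ M` and a bimorphism `p : L × M → P` such that for every bounded
distributive lattice `N` and every bimorphism `f : L × M → N` there exists a unique map
`f̄ : P → N` preserving `⊥` and binary `∨` with `f̄ ∘ p = f`. -/
theorem distribLattice_tensor_product_exists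
    (L : Type u) (M : Type v) [DistribLattice L] [BoundedOrder L]
    [DistribLattice M] [BoundedOrder M] :
    ∃ (P : Type (max u v)) (_ : DistribLattice P) (_ : BoundedOrder P) (p : L × M → P),
      IsSupBotBimorphism p ∧
        ∀ (N : Type w) (_ : DistribLattice N) (_ : BoundedOrder N) (f : L × M → N),
          IsSupBotBimorphism f →
            ∃! g : P → N, (g ⊥ = ⊥ ∧ ∀ x y : P, g (x ⊔ y) = g x ⊔ g y) ∧ g ∘ p = f := by
  classical
  refine ⟨DLTensor.TP L M, inferInstance, inferInstance,
    fun z => DLTensor.TP.mk L M {z}, ⟨?_, ?_, ?_, ?_⟩, ?_⟩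
  · -- p (a, ⊥) = ⊥
    intro a
    refine Quotient.sound ⟨fun z hz => ?_, fun z hz => absurd hz (Finset.notMem_empty z)⟩
    rw [Finset.mem_singleton.1 hz]
    exact .botr a
  · -- p (a, b ⊔ b') = p (a, b) ⊔ p (a, b')
    intro a b b'
    rw [DLTensor.TP.sup_def]
    refine Quotient.sound ⟨fun z hz => ?_, fun z hz => ?_⟩
    · rw [Finset.mem_singleton.1 hz]
      exact .supr (.gen a b (by simp)) (.gen a b' (by simp))
    · rcases Finset.mem_union.1 hz with h | h
      · rw [Finset.mem_singleton.1 h]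
        exact .mono _ _ (.gen a (b ⊔ b') (by simp)) le_rfl le_sup_left
      · rw [Finset.mem_singleton.1 h]
        exact .mono _ _ (.gen a (b ⊔ b') (by simp)) le_rfl le_sup_right
  · -- p (⊥, b) = ⊥
    intro b
    refine Quotient.sound ⟨fun z hz => ?_, fun z hz => absurd hz (Finset.notMem_empty z)⟩
    rw [Finset.mem_singleton.1 hz]
    exact .botl b
  · -- p (a ⊔ a', b) = p (a, b) ⊔ p (a', b)
    intro a a' b
    rw [DLTensor.TP.sup_def]
    refine Quotient.sound ⟨fun z hz => ?_, fun z hz => ?_⟩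
    · rw [Finset.mem_singleton.1 hz]
      exact .supl (.gen a b (by simp)) (.gen a' b (by simp))
    · rcases Finset.mem_union.1 hz with h | h
      · rw [Finset.mem_singleton.1 h]
        exact .mono _ _ (.gen (a ⊔ a') b (by simp)) le_sup_left le_rfl
      · rw [Finset.mem_singleton.1 h]
        exact .mono _ _ (.gen (a ⊔ a') b (by simp)) le_sup_right le_rfl
  · intro N _ _ f hf
    obtain ⟨hf1, hf2, hf3, hf4⟩ := hf
    have monoL : ∀ {a a' : L} (b : M), a ≤ a' → f (a, b) ≤ f (a', b) := by
      intro a a' b h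
      calc f (a, b) ≤ f (a, b) ⊔ f (a', b) := le_sup_left
        _ = f (a ⊔ a', b) := (hf4 a a' b).symm
        _ = f (a', b) := by rw [sup_eq_right.2 h]
    have monoR : ∀ (a : L) {b b' : M}, b ≤ b' → f (a, b) ≤ f (a, b') := by
      intro a b b' h
      calc f (a, b) ≤ f (a, b) ⊔ f (a, b') := le_sup_left
        _ = f (a, b ⊔ b') := (hf2 a b b').symm
        _ = f (a, b') := by rw [sup_eq_right.2 h]
    have key : ∀ {S : Finset (L × M)} {a : L} {b : M},
        DLTensor.BiIdeal S a b → f (a, b) ≤ S.sup f := by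
      intro S a b h
      induction h with
      | gen a b hm => exact Finset.le_sup hm
      | botl b => rw [hf3 b]; exact bot_le
      | botr a => rw [hf1 a]; exact bot_le
      | mono a' b' _ h1 h2 ih => exact le_trans (le_trans (monoL _ h1) (monoR _ h2)) ih
      | supl _ _ ih1 ih2 => rw [hf4]; exact sup_le ih1 ih2
      | supr _ _ ih1 ih2 => rw [hf2]; exact sup_le ih1 ih2
    have hwd : ∀ S T : Finset (L × M), S ≈ T → S.sup f = T.sup f := by
      intro S T h
      refine le_antisymm (Finset.sup_le fun z hz => ?_) (Finset.sup_le fun z hz => ?_)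
      · simpa using key (h.1 z hz)
      · simpa using key (h.2 z hz)
    refine ⟨Quotient.lift (fun S : Finset (L × M) => S.sup f) hwd, ⟨⟨?_, ?_⟩, ?_⟩, ?_⟩
    · exact Finset.sup_empty
    · intro x y
      refine Quotient.inductionOn₂ x y (fun S T => ?_)
      exact Finset.sup_union
    · funext z
      exact Finset.sup_singleton
    · rintro g' ⟨⟨hb', hs'⟩, hc'⟩
      funext x
      refine Quotient.inductionOn x (fun S => ?_)
      induction S using Finset.induction_on with
      | empty => exact hb'
      | insert _ _ hz ih =>
          rename_i z S
          have h1 : DLTensor.TP.mk L M (insert z S) =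
              DLTensor.TP.mk L M {z} ⊔ DLTensor.TP.mk L M S := by
            rw [DLTensor.TP.sup_def, Finset.insert_eq]
          calc g' (DLTensor.TP.mk L M (insert z S))
              = g' (DLTensor.TP.mk L M {z}) ⊔ g' (DLTensor.TP.mk L M S) := by
                rw [h1, hs']
            _ = f z ⊔ S.sup f := by
                have hfz : g' (DLTensor.TP.mk L M {z}) = f z := congrFun hc' z
                rw [hfz]
                exact congrArg (f z ⊔ ·) ih
            _ = (insert z S).sup f := (Finset.sup_insert).symm
end

section
/- For all Boolean algebras L and M, their tensor product in the category of Boolean algebras with maps preserving finite suprema (⊥ and binary ∨) exists: there is a Boolean algebra L ⊗ M together with a bimorphism p : L × M → L ⊗ M such that for every Boolean algebra N and every bimorphism f : L × M → N there exists a unique map f̄ : L ⊗ M → N preserving ⊥ and binary ∨ with f̄ ∘ p = f. -/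
universe u v w

open scoped Classical

namespace BATensorAux

variable {α : Type*} [BooleanAlgebra α]

/-- Stone spectrum: prime ideals. -/
def Spec (α : Type*) [BooleanAlgebra α] := {J : Order.Ideal α // Order.Ideal.IsPrime J}

def hat (a : α) : Set (Spec α) := {J | a ∉ J.1}

lemma hat_bot : hat (⊥ : α) = ∅ := by
  ext J; simp [hat, J.1.bot_mem]

lemma hat_top : hat (⊤ : α) = Set.univ := by
  ext J; simpa [hat] using J.2.toIsProper.top_notMem

lemma hat_sup (a b : α) : hat (a ⊔ b) = hat a ∪ hat b := by
  ext J; simp [hat, Order.Ideal.sup_mem_iff, -not_and, not_and_or]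

lemma hat_inf (a b : α) : hat (a ⊓ b) = hat a ∩ hat b := by
  ext J
  simp only [hat, Set.mem_setOf_eq, Set.mem_inter_iff]
  constructor
  · intro h
    exact ⟨fun ha => h (J.1.lower inf_le_left ha), fun hb => h (J.1.lower inf_le_right hb)⟩
  · intro ⟨ha, hb⟩ h
    rcases J.2.mem_or_mem h with h' | h' <;> [exact ha h'; exact hb h']

lemma hat_compl (a : α) : hat (aᶜ) = (hat a)ᶜ := by
  ext J
  simp only [hat, Set.mem_setOf_eq, Set.mem_compl_iff, not_not]
  constructor
  · intro h
    rcases J.2.mem_or_compl_mem (x := a) with h' | h' <;> [exact h'; exact absurd h' h]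
  · intro ha hc
    exact J.2.toIsProper.top_notMem (by
      have := J.1.sup_mem ha hc
      rwa [sup_compl_eq_top] at this)

lemma hat_nonempty {a : α} (ha : a ≠ ⊥) : (hat a).Nonempty := by
  have hd : Disjoint ((Order.PFilter.principal a : Order.PFilter α) : Set α)
      ((Order.Ideal.principal (⊥ : α) : Order.Ideal α) : Set α) := by
    rw [Set.disjoint_left]
    intro x hx hx'
    have h1 : a ≤ x := hx
    have h2 : x ≤ ⊥ := hx'
    exact ha (le_bot_iff.mp (h1.trans h2))
  obtain ⟨J, hJp, _, hJd⟩ := DistribLattice.prime_ideal_of_disjoint_filter_ideal hd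
  refine ⟨⟨J, hJp⟩, ?_⟩
  intro hmem
  exact Set.disjoint_left.mp hJd (Order.PFilter.mem_principal.mpr le_rfl) hmem


variable {L : Type u} {M : Type v} [BooleanAlgebra L] [BooleanAlgebra M]

def rect (q : L × M) : Set (Spec L × Spec M) := hat q.1 ×ˢ hat q.2

noncomputable def US (s : Finset (L × M)) : Set (Spec L × Spec M) := s.sup rect

lemma mem_US {x : Spec L × Spec M} {s : Finset (L × M)} :
    x ∈ US s ↔ ∃ q ∈ s, x ∈ rect q := by
  simp [US, Finset.sup_eq_iSup, Set.mem_iUnion]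

lemma US_union (s t : Finset (L × M)) : US (s ∪ t) = US s ∪ US t := by
  classical
  simp [US, Finset.sup_union, Set.sup_eq_union]

lemma US_empty : US (∅ : Finset (L × M)) = ∅ := by simp [US]

lemma US_univ : US ({(⊤, ⊤)} : Finset (L × M)) = Set.univ := by
  simp [US, rect, hat_top, Set.univ_prod_univ]

lemma mem_rect {x : Spec L × Spec M} {q : L × M} :
    x ∈ rect q ↔ x.1 ∈ hat q.1 ∧ x.2 ∈ hat q.2 := Set.mem_prod

lemma US_inter (s t : Finset (L × M)) :
    US s ∩ US t =
      US ((s ×ˢ t).image fun p => (p.1.1 ⊓ p.2.1, p.1.2 ⊓ p.2.2)) := by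
  classical
  ext x
  simp only [Set.mem_inter_iff, mem_US, Finset.mem_image, Finset.mem_product, mem_rect]
  constructor
  · rintro ⟨⟨q, hq, hx1, hx2⟩, ⟨q', hq', hx1', hx2'⟩⟩
    refine ⟨_, ⟨(q, q'), ⟨hq, hq'⟩, rfl⟩, ?_, ?_⟩ <;>
      simp [hat_inf, hx1, hx2, hx1', hx2']
  · rintro ⟨r, ⟨⟨q, q'⟩, ⟨hq, hq'⟩, rfl⟩, hx1, hx2⟩
    simp only [hat_inf, Set.mem_inter_iff] at hx1 hx2
    exact ⟨⟨q, hq, hx1.1, hx2.1⟩, ⟨q', hq', hx1.2, hx2.2⟩⟩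

lemma rect_compl (q : L × M) :
    (rect q)ᶜ = US ({(q.1ᶜ, ⊤), (⊤, q.2ᶜ)} : Finset (L × M)) := by
  classical
  ext x
  simp only [Set.mem_compl_iff, mem_US, mem_rect, Finset.mem_insert, Finset.mem_singleton]
  constructor
  · intro h
    rw [not_and_or] at h
    rcases h with h | h
    · exact ⟨(q.1ᶜ, ⊤), Or.inl rfl, by simpa [hat_compl] using h, by simp [hat_top]⟩
    · exact ⟨(⊤, q.2ᶜ), Or.inr rfl, by simp [hat_top], by simpa [hat_compl] using h⟩
  · rintro ⟨r, (rfl | rfl), h1, h2⟩ ⟨g1, g2⟩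
    · simp only [hat_compl, Set.mem_compl_iff] at h1; exact h1 g1
    · simp only [hat_compl, Set.mem_compl_iff] at h2; exact h2 g2

lemma US_compl (s : Finset (L × M)) : ∃ t, (US s)ᶜ = US t := by
  classical
  induction s using Finset.induction with
  | empty => exact ⟨{(⊤, ⊤)}, by simp [US_empty, US_univ]⟩
  | insert q s hq ih =>
    obtain ⟨t, ht⟩ := ih
    refine ⟨((({(q.1ᶜ, ⊤), (⊤, q.2ᶜ)} : Finset (L × M)) ×ˢ t).image
      fun p => (p.1.1 ⊓ p.2.1, p.1.2 ⊓ p.2.2)), ?_⟩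
    have h1 : US (insert q s) = rect q ∪ US s := by
      simp [US, Finset.sup_insert, Set.sup_eq_union]
    rw [h1, Set.compl_union, ht, rect_compl, US_inter]

/-- The tensor product carrier. -/
def TP (L : Type u) (M : Type v) [BooleanAlgebra L] [BooleanAlgebra M] : Type (max u v) :=
  {A : Set (Spec L × Spec M) // ∃ s : Finset (L × M), A = US s}

namespace TP

noncomputable instance : Max (TP L M) :=
  ⟨fun A B => ⟨A.1 ∪ B.1, by
    obtain ⟨s, hs⟩ := A.2; obtain ⟨t, ht⟩ := B.2
    exact ⟨s ∪ t, by rw [hs, ht, US_union]⟩⟩⟩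

noncomputable instance : Min (TP L M) :=
  ⟨fun A B => ⟨A.1 ∩ B.1, by
    obtain ⟨s, hs⟩ := A.2; obtain ⟨t, ht⟩ := B.2
    exact ⟨_, by rw [hs, ht, US_inter]⟩⟩⟩

noncomputable instance : Top (TP L M) := ⟨⟨Set.univ, {(⊤,⊤)}, US_univ.symm⟩⟩
noncomputable instance : Bot (TP L M) := ⟨⟨∅, ∅, US_empty.symm⟩⟩

noncomputable instance : Compl (TP L M) :=
  ⟨fun A => ⟨A.1ᶜ, by
    obtain ⟨s, hs⟩ := A.2
    obtain ⟨t, ht⟩ := US_compl (L := L) (M := M) s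
    exact ⟨t, by rw [hs, ht]⟩⟩⟩

noncomputable instance : SDiff (TP L M) := ⟨fun A B => A ⊓ Bᶜ⟩
noncomputable instance : HImp (TP L M) := ⟨fun A B => B ⊔ Aᶜ⟩
noncomputable instance : LE (TP L M) := ⟨fun A B => A.1 ≤ B.1⟩
noncomputable instance : LT (TP L M) := ⟨fun A B => A.1 < B.1⟩

noncomputable instance : BooleanAlgebra (TP L M) :=
  Function.Injective.booleanAlgebra Subtype.val Subtype.val_injective
    Iff.rfl Iff.rfl (fun _ _ => rfl) (fun _ _ => rfl) rfl rfl (fun _ => rfl)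
    (fun _ _ => sdiff_eq.symm)
    (fun _ _ => himp_eq.symm)

@[simp] lemma val_sup (A B : TP L M) : (A ⊔ B).1 = A.1 ∪ B.1 := rfl
@[simp] lemma val_bot : (⊥ : TP L M).1 = ∅ := rfl

end TP
end BATensorAux

namespace BATensorAux

section Key
variable {L : Type u} {M : Type v} {N : Type w}
  [BooleanAlgebra L] [BooleanAlgebra M] [BooleanAlgebra N]

lemma bimorph_mono {f : L × M → N} (hf : IsSupBotBimorphism f)
    {a a' : L} {b b' : M} (ha : a ≤ a') (hb : b ≤ b') : f (a, b) ≤ f (a', b') := by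
  obtain ⟨h1, h2, h3, h4⟩ := hf
  have e1 : f (a', b') = f (a, b') ⊔ f (a', b') := by
    rw [← h4, sup_eq_right.mpr ha]
  have e2 : f (a, b') = f (a, b) ⊔ f (a, b') := by
    rw [← h2, sup_eq_right.mpr hb]
  calc f (a, b) ≤ f (a, b') := e2 ▸ le_sup_left
    _ ≤ f (a', b') := e1 ▸ le_sup_left

lemma key {f : L × M → N} (hf : IsSupBotBimorphism f) :
    ∀ (s : Finset (L × M)) (a : L) (b : M), rect (a, b) ⊆ US s → f (a, b) ≤ s.sup f := by
  obtain ⟨h1, h2, h3, h4⟩ := hf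
  intro s
  induction s using Finset.induction with
  | empty =>
    intro a b h
    by_cases ha : a = ⊥
    · subst ha; rw [h3]; exact bot_le
    by_cases hb : b = ⊥
    · subst hb; rw [h1]; exact bot_le
    obtain ⟨x, hx⟩ := hat_nonempty ha
    obtain ⟨y, hy⟩ := hat_nonempty hb
    have : (x, y) ∈ US (∅ : Finset (L × M)) := h ⟨hx, hy⟩
    rw [US_empty] at this
    exact absurd this (Set.notMem_empty _)
  | insert q s hq ih =>
    intro a b h
    obtain ⟨c, d⟩ := q
    have hins : US (insert (c, d) s) = rect (c, d) ∪ US s := by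
      simp [US, Finset.sup_insert, Set.sup_eq_union]
    rw [hins] at h
    have hcov1 : rect (a ⊓ cᶜ, b) ⊆ US s := by
      rintro ⟨x, y⟩ hx
      rw [mem_rect] at hx
      simp only [hat_inf, hat_compl, Set.mem_inter_iff, Set.mem_compl_iff] at hx
      rcases h (show ((x, y) : Spec L × Spec M) ∈ rect (a, b) from ⟨hx.1.1, hx.2⟩)
        with hmem | hmem
      · exact absurd hmem.1 hx.1.2
      · exact hmem
    have hcov2 : rect (a ⊓ c, b ⊓ dᶜ) ⊆ US s := by
      rintro ⟨x, y⟩ hx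
      rw [mem_rect] at hx
      simp only [hat_inf, hat_compl, Set.mem_inter_iff, Set.mem_compl_iff] at hx
      rcases h (show ((x, y) : Spec L × Spec M) ∈ rect (a, b) from ⟨hx.1.1, hx.2.1⟩)
        with hmem | hmem
      · exact absurd hmem.2 hx.2.2
      · exact hmem
    have e0 : f (a, b) = f (a ⊓ c, b) ⊔ f (a ⊓ cᶜ, b) := by
      rw [← h4]
      congr 1
      rw [← inf_sup_left, sup_compl_eq_top, inf_top_eq]
    have e1 : f (a ⊓ c, b) = f (a ⊓ c, b ⊓ d) ⊔ f (a ⊓ c, b ⊓ dᶜ) := by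
      rw [← h2]
      congr 1
      rw [← inf_sup_left, sup_compl_eq_top, inf_top_eq]
    rw [Finset.sup_insert, e0, e1]
    have hle1 : f (a ⊓ c, b ⊓ d) ≤ f (c, d) :=
      bimorph_mono ⟨h1, h2, h3, h4⟩ inf_le_right inf_le_right
    exact sup_le (sup_le (hle1.trans le_sup_left) ((ih _ _ hcov2).trans le_sup_right))
      ((ih _ _ hcov1).trans le_sup_right)

lemma sup_le_of_US_subset {f : L × M → N} (hf : IsSupBotBimorphism f)
    {s t : Finset (L × M)} (h : US s ⊆ US t) : s.sup f ≤ t.sup f := by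
  refine Finset.sup_le fun q hq => ?_
  refine key hf t q.1 q.2 ?_
  calc rect (q.1, q.2) = rect q := by rw [Prod.mk.eta]
    _ ≤ US s := Finset.le_sup (f := rect) hq
    _ ⊆ US t := h

lemma sup_comm_aux {β γ δ : Type*} [SemilatticeSup β] [OrderBot β]
    [SemilatticeSup γ] [OrderBot γ] (h : β → γ) (hb : h ⊥ = ⊥)
    (hs : ∀ x y, h (x ⊔ y) = h x ⊔ h y) (s : Finset δ) (k : δ → β) :
    h (s.sup k) = s.sup (h ∘ k) := by
  induction s using Finset.induction with
  | empty => simpa using hb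
  | insert q s hq ih => simp [Finset.sup_insert, hs, ih]

end Key
end BATensorAux


open BATensorAux in
/-- For all Boolean algebras `L` and `M`, their tensor product in the category of Boolean
algebras with finite-suprema-preserving maps exists: there are a Boolean algebra `P = L ⊗ M`
and a bimorphism `p : L × M → P` such that for every Boolean algebra `N` and every bimorphism
`f : L × M → N` there exists a unique map `f̄ : P → N` preserving `⊥` and binary `∨` with
`f̄ ∘ p = f`. -/
theorem booleanAlgebra_tensor_product_exists
    (L : Type u) (M : Type v) [BooleanAlgebra L] [BooleanAlgebra M] :
    ∃ (P : Type (max u v)) (_ : BooleanAlgebra P) (p : L × M → P),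
      IsSupBotBimorphism p ∧
        ∀ (N : Type w) (_ : BooleanAlgebra N) (f : L × M → N),
          IsSupBotBimorphism f →
            ∃! g : P → N, (g ⊥ = ⊥ ∧ ∀ x y : P, g (x ⊔ y) = g x ⊔ g y) ∧ g ∘ p = f := by
  refine ⟨TP L M, inferInstance, fun q => ⟨rect q, {q}, (Finset.sup_singleton).symm⟩, ?_, ?_⟩
  · refine ⟨fun a => ?_, fun a b b' => ?_, fun b => ?_, fun a a' b => ?_⟩
    · exact Subtype.ext (by simp [rect, hat_bot])
    · exact Subtype.ext (by simp [rect, hat_sup, Set.prod_union]; rfl)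
    · exact Subtype.ext (by simp [rect, hat_bot])
    · exact Subtype.ext (by simp [rect, hat_sup, Set.union_prod]; rfl)
  · intro N _ f hf
    set p : L × M → TP L M := fun q => ⟨rect q, {q}, (Finset.sup_singleton).symm⟩ with hp
    set g : TP L M → N := fun x => x.2.choose.sup f with hg
    have hrep : ∀ (x : TP L M) (s : Finset (L × M)), x.1 = US s → g x = s.sup f := by
      intro x s hs
      have h1 : US x.2.choose = US s := by rw [← x.2.choose_spec, hs]
      exact le_antisymm (sup_le_of_US_subset hf h1.subset)
        (sup_le_of_US_subset hf h1.symm.subset)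
    have hval : ∀ (s : Finset (L × M)), ((s.sup p : TP L M)).1 = US s := by
      intro s
      rw [sup_comm_aux (fun x : TP L M => x.1) rfl (fun _ _ => rfl) s p]
      rfl
    refine ⟨g, ⟨⟨?_, ?_⟩, ?_⟩, ?_⟩
    · rw [hrep ⊥ ∅ (by rw [US_empty]; rfl)]
      simp
    · intro x y
      obtain ⟨s, hs⟩ := x.2
      obtain ⟨t, ht⟩ := y.2
      rw [hrep x s hs, hrep y t ht, hrep (x ⊔ y) (s ∪ t)
        (by rw [US_union, ← hs, ← ht]; rfl), Finset.sup_union]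
    · funext q
      simp only [Function.comp_apply]
      rw [hrep (p q) {q} (Finset.sup_singleton).symm, Finset.sup_singleton]
    · rintro g' ⟨⟨hb', hs'⟩, hcomp⟩
      funext x
      obtain ⟨s, hs⟩ := x.2
      have hx : x = s.sup p := Subtype.ext (by rw [hval s, hs])
      rw [hx, sup_comm_aux g' hb' hs' s p, hcomp, ← hx]
      exact (hrep x s hs).symm
end

section
/- Let Y be a sober topological space (T0 and every irreducible closed subset has a generic point) and let A ⊆ Y be a nonempty closed subset. Then A is down-directed with respect to the underlying order of Y (i.e., for all y₁, y₂ ∈ A there exists y ∈ A with y ≤ y₁ and y ≤ y₂) if and only if A has a least element with respect to the underlying order; in that case A = closure{y₀} for the least element y₀. -/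
universe u

/-- Let `Y` be a sober topological space and `A ⊆ Y` a nonempty closed subset.  With respect to
the underlying order of `Y` (`x ≤ y` iff `y ∈ closure {x}`), `A` is down-directed if and only
if `A` has a least element; in that case `A = closure {y₀}` for the least element `y₀`. -/
theorem sober_closed_directed_iff_least (Y : Type u) [TopologicalSpace Y]
    [T0Space Y] [QuasiSober Y] (A : Set Y) (hA : IsClosed A) (hne : A.Nonempty) :
    ((∀ y₁ ∈ A, ∀ y₂ ∈ A, ∃ y ∈ A, y₁ ∈ closure {y} ∧ y₂ ∈ closure {y}) ↔
      ∃ y₀ ∈ A, ∀ y ∈ A, y ∈ closure {y₀}) ∧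
    ∀ y₀ ∈ A, (∀ y ∈ A, y ∈ closure {y₀}) → A = closure {y₀} := by
  have hgen : ∀ y₀ ∈ A, (∀ y ∈ A, y ∈ closure {y₀}) → A = closure {y₀} := by
    intro y₀ hy₀ h
    apply subset_antisymm h
    exact hA.closure_subset_iff.mpr (Set.singleton_subset_iff.mpr hy₀)
  refine ⟨⟨fun hdir => ?_, ?_⟩, hgen⟩
  · have hirr : IsIrreducible A := by
      refine ⟨hne, fun U V hU hV ⟨u, huA, huU⟩ ⟨v, hvA, hvV⟩ => ?_⟩
      obtain ⟨y, hyA, hu, hv⟩ := hdir u huA v hvA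
      obtain ⟨z, hzU, hz⟩ := mem_closure_iff.mp hu U hU huU
      obtain ⟨w, hwV, hw⟩ := mem_closure_iff.mp hv V hV hvV
      exact ⟨y, hyA, hz ▸ hzU, hw ▸ hwV⟩
    have hξ : closure {hirr.genericPoint} = A := hirr.isGenericPoint_genericPoint hA
    set ξ := hirr.genericPoint
    exact ⟨ξ, hξ ▸ subset_closure rfl, fun y hy => hξ ▸ hy⟩
  · rintro ⟨y₀, hy₀, h⟩ y₁ h₁ y₂ h₂
    exact ⟨y₀, hy₀, h y₁ h₁, h y₂ h₂⟩
end

section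
/- Let X be a topological space whose compact open subsets form a basis of the topology (in particular any spectral space). Then the map from the set of closed subsets of X to the set of all maps from the lattice K(X) of compact open subsets of X to Prop preserving ⊥ and binary suprema, sending a closed set A to the map Φ_A with Φ_A(K) = (K ∩ A ≠ ∅), is a bijection: every map Φ : K(X) → Prop with Φ(∅) = False and Φ(K ∪ K') = Φ(K) ∨ Φ(K') is of the form Φ_A for a unique closed subset A of X. -/
open TopologicalSpace

universe u

/-- Let `X` be a topological space whose compact open subsets form a basis of the topology
(e.g. any spectral space).  The assignment `A ↦ Φ_A` with `Φ_A K = (K ∩ A ≠ ∅)` is a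
bijection between the closed subsets of `X` and the maps `K(X) → Prop` preserving `⊥` and
binary suprema: each `Φ_A` satisfies `Φ_A ∅ = False` and `Φ_A (K ∪ K') = Φ_A K ∨ Φ_A K'`, and
every map `Φ : K(X) → Prop` with these properties is of the form `Φ_A` for a unique closed
subset `A` of `X`. -/
theorem closeds_compactOpensSupBotHom_to_Prop_bijection (X : Type u) [TopologicalSpace X]
    (hbasis : IsTopologicalBasis {U : Set X | IsCompact U ∧ IsOpen U}) :
    (∀ A : Closeds X,
      ¬(((⊥ : CompactOpens X) : Set X) ∩ (A : Set X)).Nonempty ∧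
        ∀ K K' : CompactOpens X,
          (((K ⊔ K' : CompactOpens X) : Set X) ∩ (A : Set X)).Nonempty ↔
            ((K : Set X) ∩ (A : Set X)).Nonempty ∨ ((K' : Set X) ∩ (A : Set X)).Nonempty) ∧
    ∀ Φ : CompactOpens X → Prop, ¬Φ ⊥ → (∀ K K', Φ (K ⊔ K') ↔ Φ K ∨ Φ K') →
      ∃! A : Closeds X, ∀ K : CompactOpens X, Φ K ↔ ((K : Set X) ∩ (A : Set X)).Nonempty := by
  constructor
  · intro A
    constructor
    · simp
    · intro K K'
      simp only [CompactOpens.coe_sup, Set.union_inter_distrib_right]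
      exact Set.union_nonempty
  · intro Φ hbot hsup
    -- monotonicity
    have hmono : ∀ K K' : CompactOpens X, K ≤ K' → Φ K → Φ K' := by
      intro K K' h hK
      have he : K ⊔ K' = K' := sup_eq_right.mpr h
      rw [← he]
      exact (hsup K K').mpr (Or.inl hK)
    -- the closed set
    set S : Set X := {x | ∀ K : CompactOpens X, x ∈ (K : Set X) → Φ K} with hS
    have hSc : IsClosed S := by
      rw [← isOpen_compl_iff]
      have : Sᶜ = ⋃ K : {K : CompactOpens X // ¬ Φ K}, (K.1 : Set X) := by
        ext x
        simp only [Set.mem_compl_iff, hS, Set.mem_setOf_eq, not_forall, Set.mem_iUnion]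
        constructor
        · rintro ⟨K, hx, hK⟩; exact ⟨⟨K, hK⟩, hx⟩
        · rintro ⟨⟨K, hK⟩, hx⟩; exact ⟨K, hx, hK⟩
      rw [this]
      exact isOpen_iUnion fun K => K.1.isOpen
    refine ⟨⟨S, hSc⟩, ?_, ?_⟩
    · intro K
      constructor
      · -- Φ K → K ∩ S nonempty
        intro hK
        by_contra hne
        rw [Set.not_nonempty_iff_eq_empty] at hne
        -- every point of K lies in some compact open L with ¬ Φ L
        have hcover : (K : Set X) ⊆ ⋃ L : {L : CompactOpens X // ¬ Φ L}, (L.1 : Set X) := by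
          intro x hx
          have hxS : x ∉ S := by
            intro hxS
            exact Set.eq_empty_iff_forall_notMem.mp hne x ⟨hx, hxS⟩
          simp only [hS, Set.mem_setOf_eq, not_forall] at hxS
          obtain ⟨L, hxL, hL⟩ := hxS
          exact Set.mem_iUnion.mpr ⟨⟨L, hL⟩, hxL⟩
        obtain ⟨t, ht⟩ := K.isCompact.elim_finite_subcover
          (fun L : {L : CompactOpens X // ¬ Φ L} => (L.1 : Set X))
          (fun L => L.1.isOpen) hcover
        have hKle : K ≤ t.sup fun L => L.1 := by
          rw [← SetLike.coe_subset_coe]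
          refine ht.trans (Set.iUnion₂_subset fun L hL => ?_)
          exact SetLike.coe_subset_coe.mpr (Finset.le_sup hL)
        have hnsup : ¬ Φ (t.sup fun L => L.1) :=
          Finset.sup_induction (p := fun L => ¬ Φ L) hbot
            (fun a ha b hb h => ((hsup a b).mp h).elim ha hb)
            (fun L _ => L.2)
        exact hnsup (hmono _ _ hKle hK)
      · rintro ⟨x, hxK, hxS⟩
        exact hxS K hxK
    · -- uniqueness
      intro B hB
      ext x
      simp only [Closeds.coe_mk]
      constructor
      · intro hxB
        intro K hxK
        exact (hB K).mpr ⟨x, hxK, hxB⟩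
      · intro hxS
        by_contra hxB
        obtain ⟨K, ⟨hKc, hKo⟩, hxK, hKB⟩ :=
          hbasis.exists_subset_of_mem_open (by exact hxB : x ∈ ((B : Set X))ᶜ)
            B.2.isOpen_compl
        have hΦK : Φ ⟨⟨K, hKc⟩, hKo⟩ := hxS _ hxK
        obtain ⟨y, hyK, hyB⟩ := (hB _).mp hΦK
        exact hKB hyK hyB
end

section
/- The category Rel of sets and relations is equivalent to the opposite of the category whose objects are complete atomic Boolean algebras and whose morphisms are maps preserving arbitrary suprema; an equivalence sends a set X to its powerset P(X) and a relation r : X ⇸ Y to the suprema-preserving map P(Y) → P(X), B ↦ {x ∈ X | r[x] ∩ B ≠ ∅}. -/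
open CategoryTheory

universe u

/-- A bundled complete atomic Boolean algebra. -/
structure CABACat : Type (u + 1) where
  carrier : Type u
  [str : CompleteAtomicBooleanAlgebra carrier]

attribute [instance] CABACat.str

instance : CoeSort CABACat.{u} (Type u) := ⟨CABACat.carrier⟩

/-- The category of complete atomic Boolean algebras with morphisms the maps preserving
arbitrary suprema. -/
instance : Category CABACat.{u} where
  Hom A B := sSupHom A B
  id A := sSupHom.id A
  comp f g := g.comp f
  id_comp f := sSupHom.ext fun x => rfl
  comp_id f := sSupHom.ext fun x => rfl
  assoc f g h := sSupHom.ext fun x => rfl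

/-- The functor `Rel ⥤ CABAᵒᵖ` sending a set `X` to its powerset `P(X)` and a relation
`r : X ⇸ Y` to the suprema-preserving map `P(Y) → P(X)`, `B ↦ {x | r[x] ∩ B ≠ ∅}`. -/
def relToCABAOp : RelCat.{u} ⥤ CABACat.{u}ᵒᵖ where
  obj X := Opposite.op ⟨Set (id X : Type u)⟩
  map {X Y} r :=
    Quiver.Hom.op
      (show sSupHom (Set (id Y : Type u)) (Set (id X : Type u)) from
        { toFun := fun B => {x | ∃ y ∈ B, (x, y) ∈ r.rel}
          map_sSup' := by
            intro S
            ext x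
            simp only [Set.sSup_eq_sUnion, Set.mem_sUnion, Set.mem_setOf_eq, Set.mem_image,
              sSupHom.coe_mk]
            constructor
            · rintro ⟨y, ⟨B, hB, hy⟩, hr⟩
              exact ⟨{x | ∃ y ∈ B, (x, y) ∈ r.rel}, ⟨B, hB, rfl⟩, ⟨y, hy, hr⟩⟩
            · rintro ⟨_, ⟨B, hB, rfl⟩, ⟨y, hy, hr⟩⟩
              exact ⟨y, ⟨B, hB, hy⟩, hr⟩ })
  map_id X := by
    apply Quiver.Hom.unop_inj
    apply sSupHom.ext
    intro B
    ext x
    show (∃ y ∈ B, (x, y) ∈ (𝟙 X : X ⟶ X).rel) ↔ x ∈ B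
    constructor
    · rintro ⟨y, hy, h⟩; cases (h : x = y); exact hy
    · intro hx; exact ⟨x, hx, (rfl : x = x)⟩
  map_comp {X Y Z} r s := by
    apply Quiver.Hom.unop_inj
    apply sSupHom.ext
    intro B
    ext x
    show (∃ z ∈ B, ∃ y, (x, y) ∈ r.rel ∧ (y, z) ∈ s.rel) ↔ ∃ y, (∃ z ∈ B, (y, z) ∈ s.rel) ∧ (x, y) ∈ r.rel
    constructor
    · rintro ⟨z, hz, y, h1, h2⟩; exact ⟨y, ⟨z, hz, h2⟩, h1⟩
    · rintro ⟨y, ⟨z, hz, h2⟩, h1⟩; exact ⟨z, hz, y, h1, h2⟩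

lemma atom_le_sSup_iff {α : Type*} [CompleteAtomicBooleanAlgebra α] {a : α} (ha : IsAtom a)
    (S : Set α) : a ≤ sSup S ↔ ∃ b ∈ S, a ≤ b := by
  constructor
  · intro h
    have h1 : a = ⨆ b ∈ S, a ⊓ b := by
      conv_lhs => rw [← inf_eq_left.2 h, inf_sSup_eq]
    by_contra hc
    push_neg at hc
    have : ∀ b ∈ S, a ⊓ b = ⊥ := by
      intro b hb
      rcases eq_or_lt_of_le (inf_le_left : a ⊓ b ≤ a) with he | hl
      · exact absurd (inf_eq_left.1 he) (hc b hb)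
      · exact ha.2 _ hl
    apply ha.1
    rw [h1]
    exact iSup_eq_bot.2 fun b => iSup_eq_bot.2 (this b)
  · rintro ⟨b, hb, hab⟩
    exact hab.trans (le_sSup hb)

/-- The powerset of the atoms of a CABA, as a `sSupHom` to the CABA. -/
def cabaFromAtoms (α : Type*) [CompleteAtomicBooleanAlgebra α] :
    sSupHom (Set {a : α // IsAtom a}) α where
  toFun S := sSup (Subtype.val '' S)
  map_sSup' := by
    intro T
    apply le_antisymm
    · apply sSup_le
      rintro _ ⟨p, hp, rfl⟩
      rw [Set.sSup_eq_sUnion, Set.mem_sUnion] at hp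
      obtain ⟨S, hS, hpS⟩ := hp
      have h1 : (p : α) ∈ Subtype.val '' S := ⟨p, hpS, rfl⟩
      have h2 : sSup (Subtype.val '' S) ∈
          (fun S : Set {a : α // IsAtom a} => sSup (Subtype.val '' S)) '' T := ⟨S, hS, rfl⟩
      exact le_trans (le_sSup h1) (le_sSup h2)
    · apply sSup_le
      rintro _ ⟨S, hS, rfl⟩
      apply sSup_le
      rintro _ ⟨p, hp, rfl⟩
      exact le_sSup ⟨p, Set.mem_sUnion.2 ⟨S, hS, hp⟩, rfl⟩

/-- The atoms-below map of a CABA, as a `sSupHom` to the powerset of the atoms. -/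
def cabaToAtoms (α : Type*) [CompleteAtomicBooleanAlgebra α] :
    sSupHom α (Set {a : α // IsAtom a}) where
  toFun a := {p | p.1 ≤ a}
  map_sSup' := by
    intro S
    ext p
    simp only [Set.mem_setOf_eq, Set.sSup_eq_sUnion, Set.mem_sUnion]
    rw [atom_le_sSup_iff p.2]
    constructor
    · rintro ⟨b, hb, hpb⟩
      exact ⟨{q | q.1 ≤ b}, ⟨b, hb, rfl⟩, hpb⟩
    · rintro ⟨_, ⟨b, hb, rfl⟩, hpb⟩
      exact ⟨b, hb, hpb⟩

lemma cabaFromAtoms_toAtoms (α : Type*) [CompleteAtomicBooleanAlgebra α] (a : α) :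
    (cabaFromAtoms α) ((cabaToAtoms α) a) = a := by
  show sSup (Subtype.val '' {p : {a : α // IsAtom a} | p.1 ≤ a}) = a
  have : Subtype.val '' {p : {a : α // IsAtom a} | p.1 ≤ a} = {b : α | IsAtom b ∧ b ≤ a} := by
    ext b
    constructor
    · rintro ⟨p, hp, rfl⟩; exact ⟨p.2, hp⟩
    · rintro ⟨hb, hba⟩; exact ⟨⟨b, hb⟩, hba, rfl⟩
  rw [this, sSup_atoms_le_eq]

lemma cabaToAtoms_fromAtoms (α : Type*) [CompleteAtomicBooleanAlgebra α]
    (S : Set {a : α // IsAtom a}) : (cabaToAtoms α) ((cabaFromAtoms α) S) = S := by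
  ext p
  show p.1 ≤ sSup (Subtype.val '' S) ↔ p ∈ S
  rw [atom_le_sSup_iff p.2]
  constructor
  · rintro ⟨_, ⟨q, hq, rfl⟩, hpq⟩
    have : p.1 = q.1 := by
      rcases eq_or_lt_of_le hpq with he | hl
      · exact he
      · exact absurd (q.2.2 _ hl) p.2.1
    rwa [Subtype.ext this]
  · intro hp
    exact ⟨p.1, ⟨p, hp, rfl⟩, le_rfl⟩

/-- Unop of a morphism in `CABACatᵒᵖ`, as a `sSupHom`. -/
def unopHom {A B : CABACat.{u}ᵒᵖ} (f : A ⟶ B) : sSupHom B.unop A.unop := f.unop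

instance : relToCABAOp.{u}.Faithful := by
  constructor
  intro X Y r s h
  apply RelCat.Hom.ext
  ext ⟨x, y⟩
  have h2 : unopHom (relToCABAOp.map r) = unopHom (relToCABAOp.map s) := congrArg _ h
  have h3 : ({x | ∃ z ∈ ({y} : Set (id Y : Type u)), (x, z) ∈ r.rel} : Set (id X : Type u)) = {x | ∃ z ∈ ({y} : Set (id Y : Type u)), (x, z) ∈ s.rel} :=
    congrFun (congrArg DFunLike.coe h2) ({y} : Set (id Y : Type u))
  have h4 := Set.ext_iff.1 h3 x
  simp only [Set.mem_setOf_eq, Set.mem_singleton_iff, exists_eq_left] at h4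
  exact h4

/-- Unop of a morphism between powerset objects, as a `sSupHom`. -/
def unopHom2 {X Y : RelCat.{u}} (f : relToCABAOp.obj X ⟶ relToCABAOp.obj Y) :
    sSupHom (Set (id Y : Type u)) (Set (id X : Type u)) := f.unop

instance : relToCABAOp.{u}.Full := by
  constructor
  intro X Y f
  refine ⟨RelCat.Hom.ofRel {p | p.1 ∈ unopHom2 f ({p.2} : Set (id Y : Type u))}, ?_⟩
  apply Quiver.Hom.unop_inj
  have key : ∀ B : Set (id Y : Type u), {x | ∃ y ∈ B, x ∈ unopHom2 f ({y} : Set (id Y : Type u))} = unopHom2 f B := by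
    intro B
    have hB : (B : Set (id Y : Type u)) = sSup ((fun y => ({y} : Set (id Y : Type u))) '' B) := by
      ext y
      simp [Set.sSup_eq_sUnion]
    conv_rhs => rw [hB, map_sSup]
    ext x
    simp only [Set.mem_setOf_eq, Set.sSup_eq_sUnion, Set.mem_sUnion, Set.mem_image]
    constructor
    · rintro ⟨y, hy, hx⟩
      exact ⟨unopHom2 f ({y} : Set (id Y : Type u)), ⟨{y}, ⟨y, hy, rfl⟩, rfl⟩, hx⟩
    · rintro ⟨_, ⟨_, ⟨y, hy, rfl⟩, rfl⟩, hx⟩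
      exact ⟨y, hy, hx⟩
  exact sSupHom.ext key

instance : relToCABAOp.{u}.EssSurj := by
  constructor
  intro A
  refine ⟨{a : A.unop // IsAtom a}, ⟨?_⟩⟩
  refine Iso.op (C := CABACat.{u}) ?_
  exact
    { hom := cabaToAtoms A.unop
      inv := cabaFromAtoms A.unop
      hom_inv_id := sSupHom.ext fun a => cabaFromAtoms_toAtoms A.unop a
      inv_hom_id := sSupHom.ext fun S => cabaToAtoms_fromAtoms A.unop S }

/-- The category `Rel` of sets and relations is equivalent to the opposite of the category of
complete atomic Boolean algebras and suprema-preserving maps, via the functor sending `X` to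
`P(X)` and `r : X ⇸ Y` to `B ↦ {x | r[x] ∩ B ≠ ∅}`. -/
theorem relCat_equiv_CABAOp : relToCABAOp.{u}.IsEquivalence := {}
end

section
/- The category of Vietoris coalgebras on Stone spaces — whose objects are pairs (X, r) with X a Stone space and r a Boolean relation from X to X (every fiber r[x] closed and {x | r[x] ∩ U ≠ ∅} clopen for every clopen U), and whose morphisms f : (X, r) → (X', r') are continuous maps f : X → X' with f[r[x]] = r'[f(x)] for all x ∈ X — is equivalent to the opposite of the category of Boolean algebras with operator, whose objects are pairs (B, ◇) with B a Boolean algebra and ◇ : B → B a map preserving ⊥ and binary ∨, and whose morphisms h : (B, ◇) → (B', ◇') are Boolean algebra homomorphisms with h ∘ ◇ = ◇' ∘ h; the equivalence sends (X, r) to (Clopens(X), ◇_r) with ◇_r(U) = {x | r[x] ∩ U ≠ ∅}. -/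
open CategoryTheory TopologicalSpace

universe u

/-- A Boolean relation between topological spaces: every fiber `r[x]` is closed and
`{x | r[x] ∩ U ≠ ∅}` is clopen for every clopen `U`. -/
def IsBooleanRel {X Y : Type u} [TopologicalSpace X] [TopologicalSpace Y]
    (r : X → Y → Prop) : Prop :=
  (∀ x, IsClosed {y | r x y}) ∧
    ∀ U : Set Y, IsClopen U → IsClopen {x | ∃ y, r x y ∧ y ∈ U}

/-- A Vietoris coalgebra on Stone spaces: a Stone space (compact Hausdorff totally
disconnected space) `X` together with a Boolean relation from `X` to `X`. -/
structure StoneCoalg : Type (u + 1) where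
  carrier : Type u
  [top : TopologicalSpace carrier]
  [compact : CompactSpace carrier]
  [t2 : T2Space carrier]
  [totallyDisconnected : TotallyDisconnectedSpace carrier]
  rel : carrier → carrier → Prop
  isBooleanRel : IsBooleanRel rel

attribute [instance] StoneCoalg.top StoneCoalg.compact StoneCoalg.t2
  StoneCoalg.totallyDisconnected

instance : CoeSort StoneCoalg.{u} (Type u) := ⟨StoneCoalg.carrier⟩

/-- The category of Vietoris coalgebras on Stone spaces: morphisms `(X, r) → (X', r')` are
continuous maps `f : X → X'` with `f[r[x]] = r'[f x]` for all `x`. -/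
instance : Category StoneCoalg.{u} where
  Hom X Y := {f : X → Y // Continuous f ∧ ∀ x, f '' {y | X.rel x y} = {y | Y.rel (f x) y}}
  id X := ⟨id, continuous_id, fun x => Set.image_id _⟩
  comp {X Y Z} f g := ⟨g.1 ∘ f.1, g.2.1.comp f.2.1, fun x => by
    rw [Set.image_comp, f.2.2 x, g.2.2 (f.1 x)]; rfl⟩
  id_comp f := Subtype.ext rfl
  comp_id f := Subtype.ext rfl
  assoc f g h := Subtype.ext rfl

/-- A Boolean algebra with operator: a Boolean algebra `B` together with a map `◇ : B → B`
preserving `⊥` and binary `∨`. -/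
structure BAOCat : Type (u + 1) where
  carrier : Type u
  [str : BooleanAlgebra carrier]
  dia : carrier → carrier
  dia_bot : dia ⊥ = ⊥
  dia_sup : ∀ a b, dia (a ⊔ b) = dia a ⊔ dia b

attribute [instance] BAOCat.str

instance : CoeSort BAOCat.{u} (Type u) := ⟨BAOCat.carrier⟩

/-- The category of Boolean algebras with operator: morphisms `(B, ◇) → (B', ◇')` are Boolean
algebra homomorphisms `h` with `h ∘ ◇ = ◇' ∘ h`. -/
instance : Category BAOCat.{u} where
  Hom A B := {h : BoundedLatticeHom A B // ∀ a, h (A.dia a) = B.dia (h a)}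
  id A := ⟨BoundedLatticeHom.id A, fun a => rfl⟩
  comp {A B C} f g := ⟨g.1.comp f.1, fun a => by
    simp only [BoundedLatticeHom.comp_apply, f.2 a, g.2 (f.1 a)]⟩
  id_comp f := Subtype.ext (BoundedLatticeHom.ext fun x => rfl)
  comp_id f := Subtype.ext (BoundedLatticeHom.ext fun x => rfl)
  assoc f g h := Subtype.ext (BoundedLatticeHom.ext fun x => rfl)

/-- The functor from Vietoris coalgebras on Stone spaces to the opposite of the category of
Boolean algebras with operator, sending `(X, r)` to `(Clopens X, ◇_r)` with
`◇_r U = {x | r[x] ∩ U ≠ ∅}` and a coalgebra morphism `f` to the Boolean algebra homomorphism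
`U ↦ f ⁻¹' U`. -/
def stoneCoalgToBAOOp : StoneCoalg.{u} ⥤ BAOCat.{u}ᵒᵖ where
  obj X := Opposite.op
    { carrier := Clopens X
      dia := fun U => ⟨{x | ∃ y, X.rel x y ∧ y ∈ (U : Set X)},
        X.isBooleanRel.2 U U.isClopen⟩
      dia_bot := by
        apply SetLike.coe_injective
        ext x
        simp [Clopens.coe_bot]
      dia_sup := fun U V => by
        apply SetLike.coe_injective
        ext x
        show (∃ y, X.rel x y ∧ y ∈ ((U ⊔ V : Clopens X) : Set X)) ↔ _
        simp only [Clopens.coe_sup, Set.mem_union]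
        constructor
        · rintro ⟨y, hr, hy | hy⟩
          · exact Or.inl ⟨y, hr, hy⟩
          · exact Or.inr ⟨y, hr, hy⟩
        · rintro (⟨y, hr, hy⟩ | ⟨y, hr, hy⟩)
          · exact ⟨y, hr, Or.inl hy⟩
          · exact ⟨y, hr, Or.inr hy⟩ }
  map {X Y} f :=
    Quiver.Hom.op
      ⟨{ toFun := fun U => ⟨f.1 ⁻¹' (U : Set Y), U.isClopen.preimage f.2.1⟩
         map_sup' := fun U V => SetLike.coe_injective (by
           show f.1 ⁻¹' ((U : Set Y) ∪ (V : Set Y)) = _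
           simp [Set.preimage_union])
         map_inf' := fun U V => SetLike.coe_injective (by
           show f.1 ⁻¹' ((U : Set Y) ∩ (V : Set Y)) = _
           simp [Set.preimage_inter])
         map_top' := SetLike.coe_injective (by simp)
         map_bot' := SetLike.coe_injective (by simp) },
       by
        intro U
        apply SetLike.coe_injective
        ext x
        show (∃ y, Y.rel (f.1 x) y ∧ y ∈ (U : Set Y)) ↔
          ∃ y, X.rel x y ∧ f.1 y ∈ (U : Set Y)
        constructor
        · rintro ⟨y', hy', hU⟩
          have : y' ∈ f.1 '' {y | X.rel x y} := by rw [f.2.2 x]; exact hy'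
          obtain ⟨y, hy, rfl⟩ := this
          exact ⟨y, hy, hU⟩
        · rintro ⟨y, hy, hU⟩
          refine ⟨f.1 y, ?_, hU⟩
          have : f.1 y ∈ f.1 '' {y | X.rel x y} := ⟨y, hy, rfl⟩
          rwa [f.2.2 x] at this⟩
  map_id X := by
    apply Quiver.Hom.unop_inj
    apply Subtype.ext
    apply BoundedLatticeHom.ext
    intro U
    apply SetLike.coe_injective
    rfl
  map_comp {X Y Z} f g := by
    apply Quiver.Hom.unop_inj
    apply Subtype.ext
    apply BoundedLatticeHom.ext
    intro U
    apply SetLike.coe_injective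
    rfl

namespace JT

variable {B : Type u} [BooleanAlgebra B]

/-- The Stone spectrum of a Boolean algebra, as the set of `Bool`-valued homomorphisms. -/
def SpecSet (B : Type u) [BooleanAlgebra B] : Set (B → Bool) :=
  {x | x ⊤ = true ∧ x ⊥ = false ∧ (∀ a b, x (a ⊓ b) = (x a && x b)) ∧
    ∀ a b, x (a ⊔ b) = (x a || x b)}

def Spec (B : Type u) [BooleanAlgebra B] : Type u := SpecSet B

instance : TopologicalSpace (Spec B) := by unfold Spec; infer_instance

lemma isClosed_specSet : IsClosed (SpecSet B) := by
  have h : SpecSet B = {x : B → Bool | x ⊤ = true} ∩ ({x | x ⊥ = false} ∩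
      ((⋂ a, ⋂ b, {x : B → Bool | x (a ⊓ b) = (x a && x b)}) ∩
        ⋂ a, ⋂ b, {x : B → Bool | x (a ⊔ b) = (x a || x b)})) := by
    ext x
    simp only [SpecSet, Set.mem_inter_iff, Set.mem_iInter, Set.mem_setOf_eq]
  rw [h]
  have hev : ∀ c : B, Continuous fun x : B → Bool => x c := fun c => continuous_apply c
  refine (isClosed_eq (hev ⊤) continuous_const).inter
    ((isClosed_eq (hev ⊥) continuous_const).inter (IsClosed.inter ?_ ?_)) <;>
    refine isClosed_iInter fun a => isClosed_iInter fun b => isClosed_eq (hev _) ?_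
  · exact (continuous_of_discreteTopology
      (f := fun p : Bool × Bool => p.1 && p.2)).comp ((hev a).prodMk (hev b))
  · exact (continuous_of_discreteTopology
      (f := fun p : Bool × Bool => p.1 || p.2)).comp ((hev a).prodMk (hev b))

instance : CompactSpace (Spec B) :=
  isCompact_iff_compactSpace.mp (isClosed_specSet.isCompact)

instance : T2Space (Spec B) := by unfold Spec; infer_instance

instance : TotallyDisconnectedSpace (Spec B) := by
  unfold Spec
  exact Subtype.totallyDisconnectedSpace

end JT
namespace JT
variable {B : Type u} [BooleanAlgebra B]

lemma Spec.top (x : Spec B) : x.1 ⊤ = true := x.2.1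
lemma Spec.bot (x : Spec B) : x.1 ⊥ = false := x.2.2.1
lemma Spec.inf (x : Spec B) (a b : B) : x.1 (a ⊓ b) = (x.1 a && x.1 b) := x.2.2.2.1 a b
lemma Spec.sup (x : Spec B) (a b : B) : x.1 (a ⊔ b) = (x.1 a || x.1 b) := x.2.2.2.2 a b

lemma Spec.compl (x : Spec B) (a : B) : x.1 aᶜ = !x.1 a := by
  have h1 : (x.1 a && x.1 aᶜ) = false := by rw [← Spec.inf, inf_compl_eq_bot, Spec.bot]
  have h2 : (x.1 a || x.1 aᶜ) = true := by rw [← Spec.sup, sup_compl_eq_top, Spec.top]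
  cases h : x.1 a <;> simp [h] at h1 h2 ⊢ <;> simp [h1, h2]

lemma Spec.mono (x : Spec B) {a b : B} (hab : a ≤ b) (ha : x.1 a = true) : x.1 b = true := by
  have h := x.sup a b
  rw [sup_eq_right.mpr hab, ha] at h
  cases hb : x.1 b
  · rw [hb] at h; simpa using h.symm
  · rfl

/-- The basic clopen subset of the spectrum associated to an element. -/
def bs (a : B) : Set (Spec B) := {x | x.1 a = true}

lemma isClopen_bs (a : B) : IsClopen (bs (B := B) a) := by
  have : Continuous fun x : Spec B => x.1 a := (continuous_apply a).comp continuous_subtype_val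
  exact (isClopen_discrete {true}).preimage this

lemma bs_top : bs (⊤ : B) = Set.univ := Set.eq_univ_of_forall fun x => x.top
lemma bs_bot : bs (⊥ : B) = ∅ := by
  ext x; simp [bs, Spec.bot]
lemma bs_inf (a b : B) : bs (a ⊓ b) = bs a ∩ bs b := by
  ext x; simp [bs, Spec.inf, Set.mem_inter_iff]
lemma bs_sup (a b : B) : bs (a ⊔ b) = bs a ∪ bs b := by
  ext x; simp [bs, Spec.sup, Set.mem_union]
lemma bs_compl (a : B) : bs aᶜ = (bs a)ᶜ := by
  ext x; simp [bs, Spec.compl]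

lemma mem_bs_finsetInf {ι : Type*} (t : Finset ι) (f : ι → B) (x : Spec B) :
    x ∈ bs (t.inf f) ↔ ∀ i ∈ t, x ∈ bs (f i) := by
  classical
  induction t using Finset.induction_on with
  | empty => simp [Finset.inf_empty, bs_top]
  | insert h ih => simp [Finset.inf_insert, bs_inf, *]

lemma mem_bs_finsetSup {ι : Type*} (t : Finset ι) (f : ι → B) (x : Spec B) :
    x ∈ bs (t.sup f) ↔ ∃ i ∈ t, x ∈ bs (f i) := by
  classical
  induction t using Finset.induction_on with
  | empty => simp [Finset.sup_empty, bs_bot]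
  | insert h ih => simp [Finset.sup_insert, bs_sup, *]

/-- Every proper filter of a Boolean algebra is contained in a point of the spectrum. -/
lemma exists_spec_of_filter (G : Set B) (htop : ⊤ ∈ G)
    (hinf : ∀ a b, a ∈ G → b ∈ G → a ⊓ b ∈ G)
    (hup : ∀ a b, a ∈ G → a ≤ b → b ∈ G) (hbot : ⊥ ∉ G) :
    ∃ x : Spec B, ∀ b ∈ G, x.1 b = true := by
  classical
  have hpf : Order.IsPFilter G :=
    Order.IsPFilter.of_def ⟨⊤, htop⟩
      (fun a ha b hb => ⟨a ⊓ b, hinf a b ha hb, inf_le_left, inf_le_right⟩)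
      (fun {a b} hab ha => hup a b ha hab)
  have hdisj : Disjoint (G : Set B) ((Order.Ideal.principal (⊥ : B)) : Set B) := by
    rw [Set.disjoint_left]
    intro a ha hmem
    have : a ≤ ⊥ := hmem
    exact hbot (le_bot_iff.mp this ▸ ha)
  obtain ⟨J, hJprime, _, hJdisj⟩ :=
    DistribLattice.prime_ideal_of_disjoint_filter_ideal
      (F := hpf.toPFilter) (by exact hdisj)
  have hGJ : ∀ a ∈ G, a ∉ J := by
    intro a ha haJ
    exact Set.disjoint_left.mp hJdisj (by exact ha) haJ
  have hbotJ : (⊥ : B) ∈ J := J.lower bot_le (hJprime.toPrimePair.I.nonempty.choose_spec)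
  refine ⟨⟨fun b => decide (b ∉ J), ?_, ?_, ?_, ?_⟩, fun b hb => by simp [hGJ b hb]⟩
  · simp [hJprime.toIsProper.top_notMem]
  · simpa using J.lower bot_le hbotJ
  · intro a b
    have key : a ⊓ b ∉ J ↔ a ∉ J ∧ b ∉ J := by
      constructor
      · exact fun h => ⟨fun ha => h (J.lower inf_le_left ha),
          fun hb => h (J.lower inf_le_right hb)⟩
      · rintro ⟨ha, hb⟩ h
        rcases hJprime.mem_or_mem h with h' | h' <;> [exact ha h'; exact hb h']
    by_cases h : a ⊓ b ∈ J
    · have := (not_iff_not.mpr key).mp (not_not.mpr h)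
      push_neg at this
      by_cases ha : a ∈ J
      · simp [h, ha]
      · simp [h, ha, this ha]
    · obtain ⟨ha, hb⟩ := key.mp h
      simp [h, ha, hb]
  · intro a b
    have key : a ⊔ b ∈ J ↔ a ∈ J ∧ b ∈ J :=
      ⟨fun h => ⟨J.lower le_sup_left h, J.lower le_sup_right h⟩,
        fun ⟨ha, hb⟩ => Order.Ideal.sup_mem ha hb⟩
    by_cases ha : a ∈ J <;> by_cases hb : b ∈ J <;>
      simp [key, ha, hb]

end JT
namespace JT
variable {B : Type u} [BooleanAlgebra B]

lemma exists_sep {x y : Spec B} (hxy : x ≠ y) : ∃ a : B, x ∈ bs a ∧ y ∉ bs a := by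
  have : x.1 ≠ y.1 := fun h => hxy (Subtype.ext h)
  obtain ⟨a, ha⟩ : ∃ a, x.1 a ≠ y.1 a := by
    by_contra h; push_neg at h; exact this (funext h)
  cases hx : x.1 a
  · refine ⟨aᶜ, ?_, ?_⟩
    · show x.1 aᶜ = true; rw [Spec.compl, hx]; rfl
    · show ¬ y.1 aᶜ = true
      rw [hx] at ha
      have hy : y.1 a = true := by
        cases h : y.1 a
        · rw [h] at ha; exact absurd rfl ha
        · rfl
      rw [Spec.compl, hy]; simp
  · refine ⟨a, hx, ?_⟩
    show ¬ y.1 a = true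
    rw [hx] at ha
    exact fun h => ha h.symm

lemma exists_bs_eq {U : Set (Spec B)} (hU : IsClopen U) : ∃ c : B, U = bs c := by
  classical
  -- Step 1: every point of `U` has a basic clopen neighborhood inside `U`
  have step1 : ∀ x ∈ U, ∃ c : B, x ∈ bs c ∧ bs c ⊆ U := by
    intro x hx
    have hUc : IsCompact (Uᶜ : Set (Spec B)) := hU.isOpen.isClosed_compl.isCompact
    have hcover : (Uᶜ : Set (Spec B)) ⊆ ⋃ a : {a : B // x ∈ bs a}, (bs a.1)ᶜ := by
      intro y hy
      obtain ⟨a, hxa, hya⟩ := exists_sep (x := x) (y := y) (fun h => hy (h ▸ hx))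
      exact Set.mem_iUnion.mpr ⟨⟨a, hxa⟩, hya⟩
    obtain ⟨t, ht⟩ := hUc.elim_finite_subcover (fun a : {a : B // x ∈ bs a} => (bs a.1)ᶜ)
      (fun a => (isClopen_bs a.1).isClosed.isOpen_compl) hcover
    refine ⟨t.inf Subtype.val, ?_, ?_⟩
    · exact (mem_bs_finsetInf t Subtype.val x).mpr fun a _ => a.2
    · intro z hz
      by_contra hzU
      obtain ⟨a, hat, hza⟩ := Set.mem_iUnion₂.mp (ht hzU)
      exact hza ((mem_bs_finsetInf t Subtype.val z).mp hz a hat)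
  -- Step 2: `U` is a finite union of basic clopens
  choose! c hc1 hc2 using step1
  have hcover : U ⊆ ⋃ x : {x : Spec B // x ∈ U}, bs (c x.1) := fun x hx =>
    Set.mem_iUnion.mpr ⟨⟨x, hx⟩, hc1 x hx⟩
  obtain ⟨t, ht⟩ := hU.isClosed.isCompact.elim_finite_subcover
    (fun x : {x : Spec B // x ∈ U} => bs (c x.1))
    (fun x => (isClopen_bs _).isOpen) hcover
  refine ⟨t.sup fun x => c x.1, Set.Subset.antisymm ?_ ?_⟩
  · intro z hz
    obtain ⟨x, hxt, hzx⟩ := Set.mem_iUnion₂.mp (ht hz)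
    exact (mem_bs_finsetSup t _ z).mpr ⟨x, hxt, hzx⟩
  · intro z hz
    obtain ⟨x, _, hzx⟩ := (mem_bs_finsetSup t _ z).mp hz
    exact hc2 x.1 x.2 hzx

lemma bs_subset_iff {a b : B} : bs a ⊆ bs b ↔ a ≤ b := by
  constructor
  · intro h
    by_contra hab
    have hne : a ⊓ bᶜ ≠ ⊥ := fun h0 =>
      hab (sdiff_eq_bot_iff.mp (by rwa [sdiff_eq]))
    obtain ⟨x, hx⟩ := exists_spec_of_filter {d | a ⊓ bᶜ ≤ d} le_top
      (fun c d hc hd => le_inf hc hd) (fun c d hc hcd => hc.trans hcd)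
      (fun h0 => hne (le_bot_iff.mp h0))
    have hxab : x.1 (a ⊓ bᶜ) = true := hx _ le_rfl
    have hxa : x.1 a = true := x.mono inf_le_left hxab
    have hxbc : x.1 bᶜ = true := x.mono inf_le_right hxab
    have hxb : x.1 b = true := h hxa
    rw [Spec.compl, hxb] at hxbc
    exact absurd hxbc (by simp)
  · intro hab x hx
    exact x.mono hab hx

lemma bs_injective : Function.Injective (bs (B := B)) := fun a b h =>
  le_antisymm (bs_subset_iff.mp h.le) (bs_subset_iff.mp h.ge)

end JT
namespace JT
variable {B : Type u} [BooleanAlgebra B]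
variable (dia : B → B)

/-- The canonical relation on the spectrum of a Boolean algebra with operator. -/
def srel (x y : Spec B) : Prop := ∀ a, y.1 a = true → x.1 (dia a) = true

variable {dia}

lemma dia_mono (hsup : ∀ a b, dia (a ⊔ b) = dia a ⊔ dia b) {a b : B} (h : a ≤ b) :
    dia a ≤ dia b := by
  have : dia b = dia a ⊔ dia b := by rw [← hsup, sup_eq_right.mpr h]
  rw [this]; exact le_sup_left

lemma dia_exists (hbot : dia ⊥ = ⊥) (hsup : ∀ a b, dia (a ⊔ b) = dia a ⊔ dia b)
    {x : Spec B} {a : B} (hx : x.1 (dia a) = true) :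
    ∃ y : Spec B, srel dia x y ∧ y.1 a = true := by
  set G : Set B := {d | ∃ b, x.1 (dia bᶜ)ᶜ = true ∧ a ⊓ b ≤ d} with hG
  have hbox : ∀ b, x.1 (dia bᶜ)ᶜ = !x.1 (dia bᶜ) := fun b => x.compl _
  have htopG : ⊤ ∈ G := by
    refine ⟨⊤, ?_, le_top⟩
    rw [compl_top, hbot, x.compl, x.bot]
    rfl
  have hinfG : ∀ c d, c ∈ G → d ∈ G → c ⊓ d ∈ G := by
    rintro c d ⟨b₁, hb₁, hcb₁⟩ ⟨b₂, hb₂, hcb₂⟩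
    refine ⟨b₁ ⊓ b₂, ?_, ?_⟩
    · have h1 : dia (b₁ ⊓ b₂)ᶜ = dia b₁ᶜ ⊔ dia b₂ᶜ := by rw [compl_inf, hsup]
      rw [h1, compl_sup, x.inf, hb₁, hb₂]
      rfl
    · exact le_inf (le_trans (inf_le_inf_left a inf_le_left) hcb₁)
        (le_trans (inf_le_inf_left a inf_le_right) hcb₂)
  have hupG : ∀ c d, c ∈ G → c ≤ d → d ∈ G := by
    rintro c d ⟨b, hb, hcb⟩ hcd
    exact ⟨b, hb, hcb.trans hcd⟩
  have hbotG : ⊥ ∉ G := by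
    rintro ⟨b, hb, hab⟩
    have h1 : a ≤ bᶜ := (disjoint_iff.mpr (le_bot_iff.mp hab)).le_compl_right
    have h2 : x.1 (dia bᶜ) = true := x.mono (dia_mono hsup h1) hx
    rw [hbox, h2] at hb
    exact absurd hb (by simp)
  obtain ⟨y, hy⟩ := exists_spec_of_filter G htopG hinfG hupG hbotG
  refine ⟨y, ?_, hy a ⟨⊤, by rw [compl_top, hbot, x.compl, x.bot]; rfl, inf_le_left⟩⟩
  intro c hc
  by_contra hxc
  have hxc' : x.1 (dia c) = false := Bool.eq_false_iff.mpr hxc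
  have hcG : cᶜ ∈ G := ⟨cᶜ, by rw [compl_compl, x.compl, hxc']; rfl, inf_le_right⟩
  have := hy _ hcG
  rw [y.compl, hc] at this
  exact absurd this (by simp)

lemma srel_fiber_closed (x : Spec B) : IsClosed {y : Spec B | srel dia x y} := by
  have h : {y : Spec B | srel dia x y} =
      ⋂ a : B, {y : Spec B | y.1 a = true → x.1 (dia a) = true} := by
    ext y; simp [srel, Set.mem_iInter]
  rw [h]
  refine isClosed_iInter fun a => ?_
  by_cases hxa : x.1 (dia a) = true
  · have : {y : Spec B | y.1 a = true → x.1 (dia a) = true} = Set.univ :=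
      Set.eq_univ_of_forall fun y _ => hxa
    rw [this]; exact isClosed_univ
  · have : {y : Spec B | y.1 a = true → x.1 (dia a) = true} = (bs a)ᶜ := by
      ext y
      simp only [Set.mem_setOf_eq, Set.mem_compl_iff, bs]
      exact ⟨fun h hy => hxa (h hy), fun h hy => absurd hy h⟩
    rw [this]
    exact (isClopen_bs a).isOpen.isClosed_compl

lemma bs_dia (hbot : dia ⊥ = ⊥) (hsup : ∀ a b, dia (a ⊔ b) = dia a ⊔ dia b) (a : B) :
    {x : Spec B | ∃ y, srel dia x y ∧ y ∈ bs a} = bs (dia a) := by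
  ext x
  constructor
  · rintro ⟨y, hr, hy⟩
    exact hr a hy
  · intro hx
    obtain ⟨y, hr, hy⟩ := dia_exists hbot hsup hx
    exact ⟨y, hr, hy⟩

lemma srel_isBooleanRel (hbot : dia ⊥ = ⊥) (hsup : ∀ a b, dia (a ⊔ b) = dia a ⊔ dia b) :
    IsBooleanRel (srel (B := B) dia) := by
  refine ⟨srel_fiber_closed, fun U hU => ?_⟩
  obtain ⟨c, rfl⟩ := exists_bs_eq hU
  have : {x : Spec B | ∃ y, srel dia x y ∧ y ∈ bs c} = bs (dia c) := bs_dia hbot hsup c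
  rw [this]
  exact isClopen_bs _

end JT
namespace JT

variable {X : Type u} [TopologicalSpace X] [CompactSpace X] [T2Space X]
  [TotallyDisconnectedSpace X]

lemma exists_clopen_sep {x y : X} (h : x ≠ y) : ∃ U : Set X, IsClopen U ∧ x ∈ U ∧ y ∉ U := by
  obtain ⟨U, hU, hxU, hUy⟩ := compact_exists_isClopen_in_isOpen
    (isOpen_compl_singleton (x := y)) (by simpa using h)
  exact ⟨U, hU, hxU, fun hy => hUy hy rfl⟩

lemma closed_eq_of_clopen {A C : Set X} (hA : IsClosed A) (hC : IsClosed C)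
    (h : ∀ V : Set X, IsClopen V → ((A ∩ V).Nonempty ↔ (C ∩ V).Nonempty)) : A = C := by
  have key : ∀ (A C : Set X), IsClosed C →
      (∀ V : Set X, IsClopen V → ((A ∩ V).Nonempty → (C ∩ V).Nonempty)) → A ⊆ C := by
    intro A C hC h z hz
    by_contra hzC
    obtain ⟨V, hV, hzV, hVC⟩ := compact_exists_isClopen_in_isOpen
      hC.isOpen_compl hzC
    obtain ⟨w, hwC, hwV⟩ := h V hV ⟨z, hz, hzV⟩
    exact hVC hwV hwC
  exact Set.Subset.antisymm (key A C hC fun V hV => (h V hV).mp)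
    (key C A hA fun V hV => (h V hV).mpr)

end JT



namespace JT

open CategoryTheory

lemma faithful_aux : stoneCoalgToBAOOp.{u}.Faithful := by
  refine ⟨fun {X Y} {f g} h => ?_⟩
  apply Subtype.ext
  funext x
  by_contra hne
  obtain ⟨U, hU, hfU, hgU⟩ := exists_clopen_sep hne
  have h5 : ((stoneCoalgToBAOOp.map f).unop.1 :
      BoundedLatticeHom (Clopens Y.carrier) (Clopens X.carrier)) =
      (stoneCoalgToBAOOp.map g).unop.1 := by rw [h]
  have h6 : (⟨f.1 ⁻¹' U, hU.preimage f.2.1⟩ : Clopens X.carrier) =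
      ⟨g.1 ⁻¹' U, hU.preimage g.2.1⟩ := DFunLike.congr_fun h5 (⟨U, hU⟩ : Clopens Y.carrier)
  have h7 : (f.1 ⁻¹' U : Set X.carrier) = g.1 ⁻¹' U := congrArg Clopens.carrier h6
  have hx : x ∈ f.1 ⁻¹' U := hfU
  rw [h7] at hx
  exact hgU hx

lemma full_aux : stoneCoalgToBAOOp.{u}.Full := by
  refine ⟨fun {X Y} u => ?_⟩
  let H : BoundedLatticeHom (Clopens Y.carrier) (Clopens X.carrier) := u.unop.1
  let diaX : Clopens X.carrier → Clopens X.carrier := (stoneCoalgToBAOOp.obj X).unop.dia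
  let diaY : Clopens Y.carrier → Clopens Y.carrier := (stoneCoalgToBAOOp.obj Y).unop.dia
  have hdia : ∀ V : Clopens Y.carrier, H (diaY V) = diaX (H V) := u.unop.2
  -- the intersection of all clopens `V` of `Y` with `x ∈ H V` is nonempty
  have hne : ∀ x : X.carrier,
      (⋂ V : {V : Clopens Y.carrier // x ∈ (H V : Set X.carrier)},
        (V.1 : Set Y.carrier)).Nonempty := by
    intro x
    have hnonempty : Nonempty {V : Clopens Y.carrier // x ∈ (H V : Set X.carrier)} := by
      refine ⟨⟨⊤, ?_⟩⟩
      rw [map_top]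
      exact Set.mem_univ x
    refine IsCompact.nonempty_iInter_of_directed_nonempty_isCompact_isClosed _ ?_ ?_
      (fun V => V.1.2.isClosed.isCompact) (fun V => V.1.2.isClosed)
    · rintro ⟨V₁, hV₁⟩ ⟨V₂, hV₂⟩
      refine ⟨⟨V₁ ⊓ V₂, ?_⟩, fun z hz => hz.1, fun z hz => hz.2⟩
      rw [map_inf]
      exact ⟨hV₁, hV₂⟩
    · rintro ⟨V, hV⟩
      rcases Set.eq_empty_or_nonempty (V : Set Y.carrier) with hVe | hVn
      · exfalso
        have hVb : V = ⊥ := SetLike.coe_injective (by simpa using hVe)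
        rw [hVb, map_bot] at hV
        simpa using hV
      · exact hVn
  choose f hf using hne
  have key : ∀ (x : X.carrier) (V : Clopens Y.carrier),
      f x ∈ (V : Set Y.carrier) ↔ x ∈ (H V : Set X.carrier) := by
    intro x V
    constructor
    · intro hfx
      by_contra hx
      have hxc : x ∈ (H Vᶜ : Set X.carrier) := by
        rw [map_compl']
        simpa [Clopens.coe_compl] using hx
      have h5 := Set.mem_iInter.mp (hf x) ⟨Vᶜ, hxc⟩
      rw [Clopens.coe_compl] at h5
      exact h5 hfx
    · intro hx
      exact Set.mem_iInter.mp (hf x) ⟨V, hx⟩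
  have hpre : ∀ V : Clopens Y.carrier,
      f ⁻¹' (V : Set Y.carrier) = (H V : Set X.carrier) := by
    intro V
    ext x
    exact key x V
  have hcont : Continuous f := by
    refine (isTopologicalBasis_isClopen.continuous_iff).mpr ?_
    intro s hs
    rw [show s = ((⟨s, hs⟩ : Clopens Y.carrier) : Set Y.carrier) from rfl, hpre]
    exact (H ⟨s, hs⟩).2.isOpen
  have hrel : ∀ x, f '' {y | X.rel x y} = {y | Y.rel (f x) y} := by
    intro x
    refine closed_eq_of_clopen
      (((X.isBooleanRel.1 x).isCompact.image hcont).isClosed)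
      (Y.isBooleanRel.1 (f x)) ?_
    intro V hV
    have c1 : (f '' {y | X.rel x y} ∩ V).Nonempty ↔ ∃ y, X.rel x y ∧ f y ∈ V := by
      constructor
      · rintro ⟨z, ⟨y, hy, rfl⟩, hzV⟩
        exact ⟨y, hy, hzV⟩
      · rintro ⟨y, hy, hyV⟩
        exact ⟨f y, ⟨y, hy, rfl⟩, hyV⟩
    have c2 : ({y | Y.rel (f x) y} ∩ V).Nonempty ↔ ∃ y, Y.rel (f x) y ∧ y ∈ V :=
      ⟨fun ⟨z, hz, hzV⟩ => ⟨z, hz, hzV⟩, fun ⟨y, hy, hyV⟩ => ⟨y, hy, hyV⟩⟩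
    rw [c1, c2]
    have s1 : (∃ y, X.rel x y ∧ f y ∈ V) ↔
        x ∈ (diaX (H ⟨V, hV⟩) : Set X.carrier) := by
      constructor
      · rintro ⟨y, hy, hyV⟩
        exact ⟨y, hy, (key y ⟨V, hV⟩).mp hyV⟩
      · rintro ⟨y, hy, hyV⟩
        exact ⟨y, hy, (key y ⟨V, hV⟩).mpr hyV⟩
    have s2 : x ∈ (diaX (H ⟨V, hV⟩) : Set X.carrier) ↔
        x ∈ (H (diaY ⟨V, hV⟩) : Set X.carrier) := by
      rw [hdia]
    have s3 : x ∈ (H (diaY ⟨V, hV⟩) : Set X.carrier) ↔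
        f x ∈ (diaY ⟨V, hV⟩ : Set Y.carrier) :=
      (key x _).symm
    rw [s1, s2, s3]
    exact Iff.rfl
  have hVeq : ∀ V : Clopens Y.carrier,
      (⟨f ⁻¹' (V : Set Y.carrier), V.2.preimage hcont⟩ : Clopens X.carrier) = H V :=
    fun V => SetLike.coe_injective (hpre V)
  refine ⟨⟨f, hcont, hrel⟩, ?_⟩
  apply Quiver.Hom.unop_inj
  apply Subtype.ext
  apply BoundedLatticeHom.ext
  intro V
  exact hVeq V

end JT


namespace JT

open CategoryTheory

lemma essSurj_aux : stoneCoalgToBAOOp.{u}.EssSurj := by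
  refine ⟨fun Aop => ?_⟩
  set A := Aop.unop with hA
  let XA : StoneCoalg.{u} :=
    { carrier := Spec A.carrier
      rel := srel A.dia
      isBooleanRel := srel_isBooleanRel A.dia_bot A.dia_sup }
  let e : A.carrier → Clopens (Spec A.carrier) := fun a => ⟨bs a, isClopen_bs a⟩
  have hinj : Function.Injective e := fun a b hab =>
    bs_injective (congrArg Clopens.carrier hab)
  have hsurj : ∀ U : Clopens (Spec A.carrier), ∃ a, e a = U := by
    intro U
    obtain ⟨c, hc⟩ := exists_bs_eq U.2
    exact ⟨c, SetLike.coe_injective hc.symm⟩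
  choose g hg using hsurj
  have hge : ∀ a, g (e a) = a := fun a => hinj (hg (e a))
  have he_sup : ∀ a b, e (a ⊔ b) = e a ⊔ e b := fun a b =>
    SetLike.coe_injective (by show bs (a ⊔ b) = (bs a ∪ bs b : Set _); exact bs_sup a b)
  have he_inf : ∀ a b, e (a ⊓ b) = e a ⊓ e b := fun a b =>
    SetLike.coe_injective (by show bs (a ⊓ b) = (bs a ∩ bs b : Set _); exact bs_inf a b)
  have he_top : e ⊤ = ⊤ :=
    SetLike.coe_injective (by show bs (⊤ : A.carrier) = Set.univ; exact bs_top)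
  have he_bot : e ⊥ = ⊥ :=
    SetLike.coe_injective (by show bs (⊥ : A.carrier) = ∅; exact bs_bot)
  let diaC : Clopens (Spec A.carrier) → Clopens (Spec A.carrier) :=
    (stoneCoalgToBAOOp.obj XA).unop.dia
  have he_dia : ∀ a, e (A.dia a) = diaC (e a) := by
    intro a
    apply SetLike.coe_injective
    exact (bs_dia A.dia_bot A.dia_sup a).symm
  let eHom : BoundedLatticeHom A.carrier (Clopens (Spec A.carrier)) :=
    { toFun := e
      map_sup' := he_sup
      map_inf' := he_inf
      map_top' := he_top
      map_bot' := he_bot }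
  have hgdia : ∀ U, g (diaC U) = A.dia (g U) := by
    intro U
    apply hinj
    calc e (g (diaC U)) = diaC U := hg _
      _ = diaC (e (g U)) := by rw [hg]
      _ = e (A.dia (g U)) := (he_dia _).symm
  let gHom : BoundedLatticeHom (Clopens (Spec A.carrier)) A.carrier :=
    { toFun := g
      map_sup' := fun U V => hinj (by rw [he_sup, hg, hg, hg])
      map_inf' := fun U V => hinj (by rw [he_inf, hg, hg, hg])
      map_top' := hinj (by rw [hg, he_top])
      map_bot' := hinj (by rw [hg, he_bot]) }
  let homAC : A ⟶ (stoneCoalgToBAOOp.obj XA).unop := ⟨eHom, he_dia⟩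
  let homCA : (stoneCoalgToBAOOp.obj XA).unop ⟶ A := ⟨gHom, hgdia⟩
  refine ⟨XA, ⟨?_⟩⟩
  refine Iso.mk (Quiver.Hom.op homAC) (Quiver.Hom.op homCA) ?_ ?_
  · apply Quiver.Hom.unop_inj
    apply Subtype.ext
    apply BoundedLatticeHom.ext
    intro U
    exact hg U
  · apply Quiver.Hom.unop_inj
    apply Subtype.ext
    apply BoundedLatticeHom.ext
    intro a
    exact hge a

end JT

/-- The category of Vietoris coalgebras on Stone spaces is equivalent to the opposite of the
category of Boolean algebras with operator, via `(X, r) ↦ (Clopens X, ◇_r)` with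
`◇_r U = {x | r[x] ∩ U ≠ ∅}`. -/
theorem stoneCoalg_equiv_BAOOp : stoneCoalgToBAOOp.{u}.IsEquivalence :=
  { faithful := JT.faithful_aux, full := JT.full_aux, essSurj := JT.essSurj_aux }
end
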